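/- arXiv:2007.02587 — 4 statements merged into one kernel-verified Lean document; each statement's English description precedes it below -/
import Mathlib

section
/- Let V ⊆ ℝⁿ and let f : V × ℝᵐ → [0,∞] be lower semicontinuous in both variables jointly, convex in the second variable, and such that t ↦ f(t,0) is locally bounded. Then the pointwise perspective function h̃_f : V × ℝᵐ × ℝ → [0,∞] is lower semicontinuous. -/
open MeasureTheory Filter Topology Set
open scoped ENNReal NNReal

noncomputable section

abbrev Euc (k : ℕ) := EuclideanSpace ℝ (Fin k)

/-- The pointwise perspective function `h̃_f(t, ξ, λ)`: equal to `λ f(t, ξ/λ)` for `λ > 0`,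
to the limit `lim_{ρ↘0} ρ f(t, ξ/ρ)` for `λ = 0`, and to `+∞` for `λ < 0`. -/
def htilde {X F : Type*} [NormedAddCommGroup F] [NormedSpace ℝ F]
    (f : X → F → ℝ≥0∞) (t : X) (ξ : F) (l : ℝ) : ℝ≥0∞ :=
  if 0 < l then ENNReal.ofReal l * f t (l⁻¹ • ξ)
  else if l = 0 then Filter.limsup (fun ρ : ℝ => ENNReal.ofReal ρ * f t (ρ⁻¹ • ξ)) (𝓝[>] 0)
  else ∞

/-- A product of a continuous positive real coefficient (via `ofReal`) and a lower
semicontinuous `ℝ≥0∞`-valued function is lower semicontinuous at a point. -/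
lemma lscAt_ofReal_mul {X : Type*} [TopologicalSpace X] {c : X → ℝ} {F : X → ℝ≥0∞} {x₀ : X}
    (hc : ContinuousAt c x₀) (hpos : 0 < c x₀) (hF : LowerSemicontinuousAt F x₀) :
    LowerSemicontinuousAt (fun x => ENNReal.ofReal (c x) * F x) x₀ := by
  intro y hy
  have hy : y < ENNReal.ofReal (c x₀) * F x₀ := hy
  rcases eq_or_ne (F x₀) 0 with h0 | h0
  · rw [h0, mul_zero] at hy
    exact absurd hy (by simp)
  · have htr : Tendsto (fun r : ℝ => ENNReal.ofReal r * F x₀) (𝓝[<] c x₀)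
        (𝓝 (ENNReal.ofReal (c x₀) * F x₀)) :=
      ENNReal.Tendsto.mul_const
        ((ENNReal.continuous_ofReal.tendsto _).mono_left nhdsWithin_le_nhds)
        (Or.inl (ENNReal.ofReal_pos.mpr hpos).ne')
    have h1 : ∀ᶠ r in 𝓝[<] c x₀, y < ENNReal.ofReal r * F x₀ := htr.eventually_const_lt hy
    have h2 : ∀ᶠ r in 𝓝[<] c x₀, r ∈ Ioo 0 (c x₀) :=
      eventually_of_mem (Ioo_mem_nhdsLT_of_mem ⟨hpos, le_refl _⟩) fun _ hx => hx
    obtain ⟨r, hyr, hr0, hrc⟩ := (h1.and h2).exists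
    have hrne : ENNReal.ofReal r ≠ 0 := by
      simp [ENNReal.ofReal_eq_zero, not_le, hr0]
    -- find b < F x₀ with y < ofReal r * b
    have hdiv : y / ENNReal.ofReal r < F x₀ := by
      rcases eq_or_ne (F x₀) ⊤ with htop | htop
      · rw [htop]
        exact ENNReal.div_lt_top hyr.ne_top hrne
      · exact (ENNReal.div_lt_iff (Or.inl hrne) (Or.inl ENNReal.ofReal_ne_top)).mpr
          (by rwa [mul_comm] at hyr)
    obtain ⟨b, hb1, hb2⟩ := exists_between hdiv
    have hyb : y < ENNReal.ofReal r * b := by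
      rw [mul_comm]
      exact (ENNReal.div_lt_iff (Or.inl hrne) (Or.inl ENNReal.ofReal_ne_top)).mp hb1
    filter_upwards [hF b hb2, hc.eventually_const_lt hrc] with x hFx hcx
    exact hyb.trans_le (mul_le_mul' (ENNReal.ofReal_le_ofReal hcx.le) hFx.le)

/-- The key convexity inequality: for `0 < a ≤ b`,
`b f(t, ξ/b) ≤ a f(t, ξ/a) + (b-a) f(t,0)`. -/
lemma keyineq {n m : ℕ} {V : Set (Euc n)} {f : V → Euc m → ℝ≥0∞}
    (hconv : ∀ t : V, ∀ p q : Euc m, ∀ a b : ℝ, 0 ≤ a → 0 ≤ b → a + b = 1 →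
      f t (a • p + b • q) ≤ ENNReal.ofReal a * f t p + ENNReal.ofReal b * f t q)
    (t : V) (ξ : Euc m) {a b : ℝ} (ha : 0 < a) (hab : a ≤ b) :
    ENNReal.ofReal b * f t (b⁻¹ • ξ) ≤
      ENNReal.ofReal a * f t (a⁻¹ • ξ) + ENNReal.ofReal (b - a) * f t 0 := by
  have hb : 0 < b := lt_of_lt_of_le ha hab
  have h := hconv t (a⁻¹ • ξ) 0 (a / b) ((b - a) / b)
    (div_nonneg ha.le hb.le) (div_nonneg (by linarith) hb.le) (by field_simp; ring)
  rw [smul_zero, add_zero, smul_smul] at h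
  have harg : a / b * a⁻¹ = b⁻¹ := by field_simp
  rw [harg] at h
  have e1 : ENNReal.ofReal b * ENNReal.ofReal (a / b) = ENNReal.ofReal a := by
    rw [← ENNReal.ofReal_mul hb.le]
    congr 1
    field_simp
  have e2 : ENNReal.ofReal b * ENNReal.ofReal ((b - a) / b) = ENNReal.ofReal (b - a) := by
    rw [← ENNReal.ofReal_mul hb.le]
    congr 1
    field_simp
  calc ENNReal.ofReal b * f t (b⁻¹ • ξ)
      ≤ ENNReal.ofReal b * (ENNReal.ofReal (a / b) * f t (a⁻¹ • ξ)
          + ENNReal.ofReal ((b - a) / b) * f t 0) := mul_le_mul_right h _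
    _ = ENNReal.ofReal a * f t (a⁻¹ • ξ) + ENNReal.ofReal (b - a) * f t 0 := by
        rw [mul_add, ← mul_assoc, ← mul_assoc, e1, e2]

/-- Lemma 5: if `f : V × ℝᵐ → [0,∞]` is lower semicontinuous jointly,
convex in the second variable, and `t ↦ f(t,0)` is locally bounded, then the pointwise
perspective function `h̃_f : V × ℝᵐ × ℝ → [0,∞]` is lower semicontinuous. -/
theorem stmt2 (n m : ℕ) (V : Set (Euc n)) (f : V → Euc m → ℝ≥0∞)
    (hlsc : LowerSemicontinuous fun q : V × Euc m => f q.1 q.2)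
    (hconv : ∀ t : V, ∀ p q : Euc m, ∀ a b : ℝ, 0 ≤ a → 0 ≤ b → a + b = 1 →
      f t (a • p + b • q) ≤ ENNReal.ofReal a * f t p + ENNReal.ofReal b * f t q)
    (hbd : ∀ t : V, ∃ s ∈ 𝓝 t, ∃ C : ℝ≥0, ∀ t' ∈ s, f t' 0 ≤ C) :
    LowerSemicontinuous fun q : V × Euc m × ℝ => htilde f q.1 q.2.1 q.2.2 := by
  intro x
  obtain ⟨t₀, ξ₀, l₀⟩ := x
  have hsnd : ContinuousAt (fun x : V × Euc m × ℝ => x.2.2) (t₀, ξ₀, l₀) :=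
    (continuous_snd.comp continuous_snd).continuousAt
  rcases lt_trichotomy l₀ 0 with hneg | hzero | hpos
  · -- l₀ < 0
    intro y hy
    have hy' : y < ⊤ := by
      simpa [htilde, not_lt.mpr hneg.le, hneg.ne] using hy
    filter_upwards [hsnd.eventually_lt_const hneg] with x hx
    have hval : htilde f x.1 x.2.1 x.2.2 = ⊤ := by
      simp [htilde, not_lt.mpr hx.le, hx.ne]
    rw [hval]
    exact hy'
  · -- l₀ = 0
    subst hzero
    intro y hy
    have hy' : y < Filter.limsup (fun ρ : ℝ => ENNReal.ofReal ρ * f t₀ (ρ⁻¹ • ξ₀)) (𝓝[>] 0) := by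
      simpa [htilde] using hy
    obtain ⟨s, hs, C, hC⟩ := hbd t₀
    obtain ⟨y₁, hyy1, hy1L⟩ := exists_between hy'
    obtain ⟨y₂, hy12, hy2L⟩ := exists_between hy1L
    have htend : Tendsto (fun ρ : ℝ => y₁ + ENNReal.ofReal ρ * (C : ℝ≥0∞))
        (𝓝[>] (0 : ℝ)) (𝓝 y₁) := by
      have h1 : Tendsto (fun ρ : ℝ => ENNReal.ofReal ρ * (C : ℝ≥0∞)) (𝓝[>] (0 : ℝ)) (𝓝 0) := by
        have h0 : Tendsto (fun ρ : ℝ => ENNReal.ofReal ρ) (𝓝[>] (0 : ℝ))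
            (𝓝 (ENNReal.ofReal 0)) :=
          (ENNReal.continuous_ofReal.tendsto _).mono_left nhdsWithin_le_nhds
        simpa using ENNReal.Tendsto.mul_const h0 (Or.inr ENNReal.coe_ne_top)
      simpa using (tendsto_const_nhds (x := y₁) (f := 𝓝[>] (0:ℝ))).add h1
    have heps : ∀ᶠ ρ in 𝓝[>] (0 : ℝ), y₁ + ENNReal.ofReal ρ * (C : ℝ≥0∞) < y₂ :=
      htend.eventually_lt_const hy12
    have hfreq : ∃ᶠ ρ in 𝓝[>] (0 : ℝ), y₂ < ENNReal.ofReal ρ * f t₀ (ρ⁻¹ • ξ₀) :=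
      Filter.frequently_lt_of_lt_limsup (by isBoundedDefault) hy2L
    obtain ⟨ρ₀, hρ₀φ, hρ₀eps, hρ₀mem⟩ :=
      (hfreq.and_eventually (heps.and eventually_mem_nhdsWithin)).exists
    have hρ₀ : (0 : ℝ) < ρ₀ := hρ₀mem
    have hcont : ContinuousAt (fun x : V × Euc m × ℝ => x.2.2 + ρ₀) (t₀, ξ₀, 0) :=
      hsnd.add continuousAt_const
    have hcpos : (0 : ℝ) < (fun x : V × Euc m × ℝ => x.2.2 + ρ₀) (t₀, ξ₀, 0) := by
      simpa using hρ₀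
    have hm : ContinuousAt
        (fun x : V × Euc m × ℝ => ((x.1, (x.2.2 + ρ₀)⁻¹ • x.2.1) : V × Euc m)) (t₀, ξ₀, 0) :=
      ContinuousAt.prodMk continuousAt_fst
        ((hcont.inv₀ hcpos.ne').smul (continuous_fst.comp continuous_snd).continuousAt)
    have hFlsc : LowerSemicontinuousAt
        (fun x : V × Euc m × ℝ => f x.1 ((x.2.2 + ρ₀)⁻¹ • x.2.1)) (t₀, ξ₀, 0) :=
      fun z hz => hm.eventually (hlsc _ z hz)
    have hg := lscAt_ofReal_mul hcont hcpos hFlsc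
    have hgval : y₂ < ENNReal.ofReal ((t₀, ξ₀, (0:ℝ)).2.2 + ρ₀) *
        f t₀ (((t₀, ξ₀, (0:ℝ)).2.2 + ρ₀)⁻¹ • ξ₀) := by
      simpa using hρ₀φ
    have hfin : ENNReal.ofReal ρ₀ * (C : ℝ≥0∞) ≠ ⊤ :=
      ENNReal.mul_ne_top ENNReal.ofReal_ne_top ENNReal.coe_ne_top
    filter_upwards [hg y₂ hgval, continuousAt_fst.preimage_mem_nhds hs] with x h1 h2
    rcases lt_trichotomy x.2.2 0 with h | h | h
    · have hval : htilde f x.1 x.2.1 x.2.2 = ⊤ := by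
        simp [htilde, not_lt.mpr h.le, h.ne]
      rw [hval]
      exact lt_of_lt_of_le (hyy1.trans hy12) le_top
    · -- x.2.2 = 0
      have hval : htilde f x.1 x.2.1 x.2.2 =
          Filter.limsup (fun ρ : ℝ => ENNReal.ofReal ρ * f x.1 (ρ⁻¹ • x.2.1)) (𝓝[>] 0) := by
        simp [htilde, h]
      rw [hval]
      have key : ∀ᶠ ρ in 𝓝[>] (0 : ℝ), y₁ ≤ ENNReal.ofReal ρ * f x.1 (ρ⁻¹ • x.2.1) := by
        filter_upwards [Ioo_mem_nhdsGT_of_mem ⟨le_refl (0:ℝ), hρ₀⟩] with ρ hρ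
        have hB := keyineq hconv x.1 x.2.1 hρ.1 hρ.2.le
        have hle : ENNReal.ofReal (ρ₀ - ρ) * f x.1 0 ≤ ENNReal.ofReal ρ₀ * (C : ℝ≥0∞) :=
          mul_le_mul' (ENNReal.ofReal_le_ofReal (by linarith [hρ.1])) (hC _ h2)
        have h1' : y₂ < ENNReal.ofReal ρ₀ * f x.1 (ρ₀⁻¹ • x.2.1) := by
          simpa [h] using h1
        have chain : y₁ + ENNReal.ofReal ρ₀ * (C : ℝ≥0∞) <
            ENNReal.ofReal ρ * f x.1 (ρ⁻¹ • x.2.1) + ENNReal.ofReal ρ₀ * (C : ℝ≥0∞) :=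
          hρ₀eps.trans (h1'.trans_le (hB.trans (add_le_add le_rfl hle)))
        exact ((ENNReal.add_lt_add_iff_right hfin).mp chain).le
      exact lt_of_lt_of_le hyy1 (Filter.le_limsup_of_frequently_le key.frequently)
    · -- 0 < x.2.2
      have hval : htilde f x.1 x.2.1 x.2.2 =
          ENNReal.ofReal x.2.2 * f x.1 (x.2.2⁻¹ • x.2.1) := by
        simp [htilde, h]
      rw [hval]
      have hB := keyineq (a := x.2.2) (b := x.2.2 + ρ₀) hconv x.1 x.2.1 h
        (by linarith)
      have hsub : x.2.2 + ρ₀ - x.2.2 = ρ₀ := by ring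
      rw [hsub] at hB
      have hle : ENNReal.ofReal ρ₀ * f x.1 0 ≤ ENNReal.ofReal ρ₀ * (C : ℝ≥0∞) :=
        mul_le_mul' le_rfl (hC _ h2)
      have chain : y₁ + ENNReal.ofReal ρ₀ * (C : ℝ≥0∞) <
          ENNReal.ofReal x.2.2 * f x.1 (x.2.2⁻¹ • x.2.1) + ENNReal.ofReal ρ₀ * (C : ℝ≥0∞) :=
        hρ₀eps.trans (h1.trans_le (hB.trans (add_le_add le_rfl hle)))
      exact hyy1.trans ((ENNReal.add_lt_add_iff_right hfin).mp chain)
  · -- l₀ > 0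
    have hm : ContinuousAt
        (fun x : V × Euc m × ℝ => ((x.1, x.2.2⁻¹ • x.2.1) : V × Euc m)) (t₀, ξ₀, l₀) :=
      ContinuousAt.prodMk continuousAt_fst
        ((hsnd.inv₀ hpos.ne').smul (continuous_fst.comp continuous_snd).continuousAt)
    have hFlsc : LowerSemicontinuousAt
        (fun x : V × Euc m × ℝ => f x.1 (x.2.2⁻¹ • x.2.1)) (t₀, ξ₀, l₀) :=
      fun z hz => hm.eventually (hlsc _ z hz)
    have hg := lscAt_ofReal_mul hsnd hpos hFlsc
    intro y hy
    have hy' : y < ENNReal.ofReal ((t₀, ξ₀, l₀) : V × Euc m × ℝ).2.2 *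
        f t₀ ((((t₀, ξ₀, l₀) : V × Euc m × ℝ).2.2)⁻¹ • ξ₀) := by
      simpa [htilde, hpos] using hy
    filter_upwards [hg y hy', hsnd.eventually_const_lt hpos] with x h1 h2
    have hval : htilde f x.1 x.2.1 x.2.2 =
        ENNReal.ofReal x.2.2 * f x.1 (x.2.2⁻¹ • x.2.1) := by
      simp [htilde, h2]
    rw [hval]
    exact h1
end
end

section
/- Let V ⊆ ℝⁿ be nonempty, let f : V × ℝᵐ → ℝ be nonnegative, convex in the second variable, with t ↦ f(t,0) locally bounded, and define the set-valued mapping Q : V ⇉ ℝ^{m+1} by Q(t) := {(ξ,λ) ∈ ℝᵐ × ℝ : λ + f*(t,ξ) ≤ 0}. Then f is lower semicontinuous (jointly in both variables) if and only if Q is inner semicontinuous. -/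
open MeasureTheory Filter Topology Set
open scoped ENNReal NNReal

noncomputable section

/-- Convex conjugate in the last variable of a real-valued integrand, `EReal`-valued. -/
def conjR {X F : Type*} [NormedAddCommGroup F] [InnerProductSpace ℝ F]
    (f : X → F → ℝ) (t : X) (ξ : F) : EReal :=
  ⨆ p : F, ((inner ℝ ξ p - f t p : ℝ) : EReal)

/-- The set-valued mapping `Q(t) = {(ξ, λ) : λ + f*(t, ξ) ≤ 0}`. -/
def Qmap {X F : Type*} [NormedAddCommGroup F] [InnerProductSpace ℝ F]
    (f : X → F → ℝ) (t : X) : Set (F × ℝ) :=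
  {q | ((q.2 : ℝ) : EReal) + conjR f t q.1 ≤ 0}

/-- A set-valued mapping `Q : X ⇉ Y` is inner semicontinuous if the preimage
`Q⁻¹(W) = {x : Q(x) ∩ W ≠ ∅}` of every open `W ⊆ Y` is open. -/
def InnerSemicontinuous {X Y : Type*} [TopologicalSpace X] [TopologicalSpace Y]
    (Q : X → Set Y) : Prop :=
  ∀ W : Set Y, IsOpen W → IsOpen {x : X | (Q x ∩ W).Nonempty}

local notation "⟪" x ", " y "⟫" => @inner ℝ _ _ x y
open scoped Pointwise

lemma mem_Qmap_iff {X : Type*} {m : ℕ} (f : X → Euc m → ℝ) (t : X) (q : Euc m × ℝ) :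
    q ∈ Qmap f t ↔ ∀ x : Euc m, q.2 + ⟪q.1, x⟫ ≤ f t x := by
  constructor
  · intro h x
    have h1 : ((⟪q.1, x⟫ - f t x : ℝ) : EReal) ≤ conjR f t q.1 :=
      le_iSup (fun p => ((⟪q.1, p⟫ - f t p : ℝ) : EReal)) x
    have h2 : ((q.2 + (⟪q.1, x⟫ - f t x) : ℝ) : EReal) ≤ 0 := by
      rw [EReal.coe_add]
      exact le_trans (add_le_add_right h1 _) h
    have := EReal.coe_nonpos.mp h2
    linarith
  · intro h
    have h1 : conjR f t q.1 ≤ ((-q.2 : ℝ) : EReal) := by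
      refine iSup_le fun p => ?_
      exact EReal.coe_le_coe_iff.mpr (by linarith [h p])
    calc ((q.2 : ℝ) : EReal) + conjR f t q.1 ≤ ((q.2:ℝ) : EReal) + ((-q.2 : ℝ):EReal) :=
          add_le_add_right h1 _
      _ = ((q.2 + -q.2 : ℝ) : EReal) := (EReal.coe_add _ _).symm
      _ ≤ 0 := by norm_num

lemma exists_subgradient {m : ℕ} (g : Euc m → ℝ) (hg : ConvexOn ℝ Set.univ g) (p₀ : Euc m) :
    ∃ ξ : Euc m, ∀ x, ⟪ξ, x⟫ - g x ≤ ⟪ξ, p₀⟫ - g p₀ := by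
  have hcont : Continuous g := hg.locallyLipschitz.continuous
  set S : Set (Euc m × ℝ) := {q | g q.1 < q.2} with hS
  have hSopen : IsOpen S := isOpen_lt (hcont.comp continuous_fst) continuous_snd
  have hSconv : Convex ℝ S := by
    rintro a ha b hb u v hu hv huv
    simp only [hS, mem_setOf_eq] at ha hb ⊢
    have h1 := hg.2 (mem_univ a.1) (mem_univ b.1) hu hv huv
    have h2 : u • g a.1 + v • g b.1 < u * a.2 + v * b.2 := by
      rcases eq_or_lt_of_le hu with h | h
      · simp only [← h, zero_smul, zero_mul, zero_add]
        have hv1 : v = 1 := by linarith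
        simp [hv1, hb.le]
        exact hb
      · rcases eq_or_lt_of_le hv with h' | h'
        · simp only [← h', zero_smul, zero_mul, add_zero]
          have hu1 : u = 1 := by linarith
          simp [hu1]
          exact ha
        · have := mul_lt_mul_of_pos_left ha h
          have := mul_lt_mul_of_pos_left hb h'
          simp only [smul_eq_mul]
          linarith
    calc g (u • a + v • b).1 ≤ u • g a.1 + v • g b.1 := h1
      _ < u * a.2 + v * b.2 := h2
      _ = (u • a + v • b).2 := by simp [smul_eq_mul]
  have hnot : ((p₀, g p₀) : Euc m × ℝ) ∉ S := by simp [hS]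
  obtain ⟨φ, hφ⟩ := geometric_hahn_banach_point_open hSconv hSopen hnot
  set sc : ℝ := φ ((0 : Euc m), (1:ℝ)) with hsc
  have hrep : ∀ (x : Euc m) (y : ℝ), φ (x, y) = φ (x, 0) + y * sc := by
    intro x y
    have : ((x, y) : Euc m × ℝ) = (x, 0) + y • ((0:Euc m), (1:ℝ)) := by
      simp [Prod.ext_iff]
    rw [this, map_add, _root_.map_smul, smul_eq_mul, hsc]
  have hspos : 0 < sc := by
    have := hφ (p₀, g p₀ + 1) (by simp [hS])
    rw [hrep p₀ (g p₀ + 1), hrep p₀ (g p₀)] at this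
    nlinarith
  have hkey : ∀ x : Euc m, φ (p₀, 0) + g p₀ * sc ≤ φ (x, 0) + g x * sc := by
    intro x
    have h : ∀ ε : ℝ, 0 < ε → φ (p₀, 0) + g p₀ * sc ≤ φ (x, 0) + g x * sc + ε := by
      intro ε hε
      have h0 := hφ (x, g x + ε / sc) (by simp [hS]; positivity)
      rw [hrep x (g x + ε / sc), hrep p₀ (g p₀)] at h0
      have hne : sc ≠ 0 := ne_of_gt hspos
      have : φ (p₀,0) + g p₀ * sc < φ (x,0) + (g x + ε / sc) * sc := h0
      have hd : (ε / sc) * sc = ε := div_mul_cancel₀ _ hne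
      nlinarith
    exact le_of_forall_pos_le_add h
  set a : Euc m →L[ℝ] ℝ := φ.comp (ContinuousLinearMap.inl ℝ (Euc m) ℝ) with ha
  have haval : ∀ x : Euc m, a x = φ (x, 0) := fun x => rfl
  set w : Euc m := (InnerProductSpace.toDual ℝ (Euc m)).symm a with hwdef
  have hw : ∀ x : Euc m, ⟪w, x⟫ = φ (x, 0) := by
    intro x
    rw [hwdef]
    rw [InnerProductSpace.toDual_symm_apply]
    exact haval x
  refine ⟨-(sc⁻¹ • w), fun x => ?_⟩
  have h1 := hkey x
  have h2 : ∀ y : Euc m, ⟪-(sc⁻¹ • w), y⟫ = -(sc⁻¹ * φ (y, 0)) := by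
    intro y
    rw [inner_neg_left, real_inner_smul_left, hw]
  rw [h2 x, h2 p₀]
  have hsinv : 0 < sc⁻¹ := inv_pos.mpr hspos
  have hm : sc⁻¹ * (φ (p₀,0) + g p₀ * sc) ≤ sc⁻¹ * (φ (x,0) + g x * sc) :=
    mul_le_mul_of_nonneg_left h1 hsinv.le
  have e : ∀ u v : ℝ, sc⁻¹ * (u + v * sc) = sc⁻¹ * u + v := by
    intro u v
    rw [mul_add, mul_comm v sc, ← mul_assoc, inv_mul_cancel₀ (ne_of_gt hspos), one_mul]
  rw [e, e] at hm
  linarith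

lemma convex_Qmap {X : Type*} {m : ℕ} (f : X → Euc m → ℝ) (t : X) : Convex ℝ (Qmap f t) := by
  rintro q hq r hr u v hu hv huv
  rw [mem_Qmap_iff] at hq hr ⊢
  intro x
  have h1 := hq x
  have h2 := hr x
  have e1 : (u • q + v • r).2 = u * q.2 + v * r.2 := by simp [smul_eq_mul]
  have e2 : ⟪(u • q + v • r).1, x⟫ = u * ⟪q.1, x⟫ + v * ⟪r.1, x⟫ := by
    simp only [Prod.fst_add, Prod.smul_fst]
    rw [inner_add_left, real_inner_smul_left, real_inner_smul_left]
  rw [e1, e2]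
  have hufx : u * (q.2 + ⟪q.1,x⟫) ≤ u * f t x := mul_le_mul_of_nonneg_left h1 hu
  have hvfx : v * (r.2 + ⟪r.1,x⟫) ≤ v * f t x := mul_le_mul_of_nonneg_left h2 hv
  have : u * f t x + v * f t x = f t x := by rw [← add_mul, huv, one_mul]
  nlinarith

lemma isClosed_Qmap {X : Type*} {m : ℕ} (f : X → Euc m → ℝ) (t : X) : IsClosed (Qmap f t) := by
  have he : Qmap f t = ⋂ x : Euc m, {q : Euc m × ℝ | q.2 + ⟪q.1, x⟫ ≤ f t x} := by
    ext q
    simp only [mem_iInter, mem_setOf_eq]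
    exact mem_Qmap_iff f t q
  rw [he]
  refine isClosed_iInter fun x => isClosed_le ?_ continuous_const
  exact continuous_snd.add (continuous_fst.inner continuous_const)

lemma zero_mem_Qmap {X : Type*} {m : ℕ} (f : X → Euc m → ℝ) (t : X) (h : ∀ x, 0 ≤ f t x) :
    ((0 : Euc m), (0 : ℝ)) ∈ Qmap f t := by
  rw [mem_Qmap_iff]
  intro x
  simpa using h x

set_option maxHeartbeats 1000000 in
theorem dir2 {n m : ℕ} (V : Set (Euc n)) (f : V → Euc m → ℝ)
    (hconv : ∀ t : V, ConvexOn ℝ Set.univ (f t))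
    (hQ : InnerSemicontinuous (Qmap f)) :
    LowerSemicontinuous (fun q : V × Euc m => f q.1 q.2) := by
  rintro ⟨t₀, p₀⟩ c hc
  simp only at hc
  obtain ⟨ξ, hξ⟩ := exists_subgradient (f t₀) (hconv t₀) p₀
  have hmem : ((ξ, f t₀ p₀ - ⟪ξ, p₀⟫) : Euc m × ℝ) ∈ Qmap f t₀ := by
    rw [mem_Qmap_iff]
    intro x
    have := hξ x
    simp only
    linarith
  set lam := f t₀ p₀ - ⟪ξ, p₀⟫ with hlam
  set D := f t₀ p₀ - c with hDdef
  have hD0 : 0 < D := by simp only [hDdef]; linarith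
  have hP : (0:ℝ) < ‖p₀‖ + 2 := by positivity
  set δ := D / (2 * (‖p₀‖ + 2)) with hδdef
  set δ' := min 1 (D / (4 * (‖ξ‖ + 1))) with hδ'def
  have hδ0 : 0 < δ := div_pos hD0 (by positivity)
  have hδ'0 : 0 < δ' := lt_min one_pos (div_pos hD0 (by positivity))
  have hopen := hQ (Metric.ball ((ξ, lam) : Euc m × ℝ) δ) Metric.isOpen_ball
  have ht₀mem : t₀ ∈ {t : V | (Qmap f t ∩ Metric.ball ((ξ, lam) : Euc m × ℝ) δ).Nonempty} :=
    ⟨(ξ, lam), hmem, Metric.mem_ball_self hδ0⟩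
  have hnhds : ({t : V | (Qmap f t ∩ Metric.ball ((ξ, lam) : Euc m × ℝ) δ).Nonempty}
      ×ˢ Metric.ball p₀ δ') ∈ 𝓝 ((t₀, p₀) : V × Euc m) :=
    prod_mem_nhds (hopen.mem_nhds ht₀mem) (Metric.ball_mem_nhds _ hδ'0)
  filter_upwards [hnhds] with q hq
  obtain ⟨hq1, hq2⟩ := hq
  obtain ⟨⟨ξ', lam'⟩, hmem', hball'⟩ := hq1
  have hfl := (mem_Qmap_iff f q.1 _).mp hmem' q.2
  simp only at hfl
  rw [Metric.mem_ball, Prod.dist_eq, max_lt_iff] at hball'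
  obtain ⟨hdξ, hdlam⟩ := hball'
  rw [Metric.mem_ball, dist_eq_norm] at hq2
  rw [dist_eq_norm] at hdξ
  have hdlam' : |lam' - lam| < δ := by rwa [Real.dist_eq] at hdlam
  have hq2n : ‖q.2‖ ≤ ‖p₀‖ + 1 := by
    have h := norm_sub_norm_le q.2 p₀
    have hδ'1 : δ' ≤ 1 := min_le_left _ _
    linarith
  have e1 : ⟪ξ', q.2⟫ - ⟪ξ, p₀⟫ = ⟪ξ' - ξ, q.2⟫ + ⟪ξ, q.2 - p₀⟫ := by
    rw [inner_sub_left, inner_sub_right]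
    ring
  have h1 : |⟪ξ' - ξ, q.2⟫| ≤ δ * (‖p₀‖ + 1) := by
    refine le_trans (abs_real_inner_le_norm _ _) ?_
    exact mul_le_mul hdξ.le hq2n (norm_nonneg _) hδ0.le
  have h2 : |⟪ξ, q.2 - p₀⟫| ≤ ‖ξ‖ * δ' :=
    le_trans (abs_real_inner_le_norm _ _) (mul_le_mul_of_nonneg_left hq2.le (norm_nonneg _))
  have h2' : ‖ξ‖ * δ' ≤ D / 4 := by
    have hle : δ' ≤ D / (4 * (‖ξ‖ + 1)) := min_le_right _ _
    have h := mul_le_mul_of_nonneg_left hle (norm_nonneg ξ)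
    refine le_trans h ?_
    rw [mul_div_assoc', div_le_div_iff₀ (by positivity) (by norm_num)]
    nlinarith [hD0.le, norm_nonneg ξ]
  have h3 : δ * (‖p₀‖ + 2) = D / 2 := by
    rw [hδdef]
    field_simp
  have h4 : δ * (‖p₀‖ + 2) = δ * (‖p₀‖ + 1) + δ := by ring
  have hsum : lam + ⟪ξ, p₀⟫ = f t₀ p₀ := by rw [hlam]; ring
  have ha1 := neg_abs_le (⟪ξ' - ξ, q.2⟫)
  have ha2 := neg_abs_le (⟪ξ, q.2 - p₀⟫)
  have ha3 := neg_abs_le (lam' - lam)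
  linarith

set_option maxHeartbeats 2000000 in
theorem dir1 {n m : ℕ} (V : Set (Euc n)) (f : V → Euc m → ℝ)
    (hnonneg : ∀ t p, 0 ≤ f t p)
    (hconv : ∀ t : V, ConvexOn ℝ Set.univ (f t))
    (hbd : ∀ t : V, ∃ s ∈ 𝓝 t, ∃ C : ℝ, ∀ t' ∈ s, |f t' 0| ≤ C)
    (hf : LowerSemicontinuous (fun q : V × Euc m => f q.1 q.2)) :
    InnerSemicontinuous (Qmap f) := by
  intro W hW
  rw [isOpen_iff_mem_nhds]
  rintro t₀ ⟨⟨ξ₀, l₀⟩, hQ₀, hW₀⟩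
  obtain ⟨ε, hε, hballW⟩ := Metric.isOpen_iff.mp hW _ hW₀
  obtain ⟨s, hs, C, hC⟩ := hbd t₀
  have hQ₀' := (mem_Qmap_iff f t₀ _).mp hQ₀
  simp only at hQ₀'
  set γ := ε / 2 with hγdef
  have hγ0 : 0 < γ := by positivity
  have hγε : γ < ε := by rw [hγdef]; linarith
  set R := max 1 ((max 0 (C - l₀) + 1) / γ) with hRdef
  have hR1 : (1:ℝ) ≤ R := le_max_left _ _
  have hR0 : (0:ℝ) < R := lt_of_lt_of_le one_pos hR1
  have hγR : max 0 (C - l₀) + 1 ≤ γ * R := by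
    have h := le_max_right 1 ((max 0 (C - l₀) + 1) / γ)
    calc max 0 (C - l₀) + 1 = γ * ((max 0 (C - l₀) + 1) / γ) := by field_simp
      _ ≤ γ * R := mul_le_mul_of_nonneg_left h hγ0.le
  set δ₀ := min γ 1 with hδ₀def
  have hδ₀0 : 0 < δ₀ := lt_min hγ0 one_pos
  have hδ₀γ : δ₀ ≤ γ := min_le_left _ _
  have hδ₀1 : δ₀ ≤ 1 := min_le_right _ _
  -- the lsc auxiliary function and open superlevel set
  have hGlsc : LowerSemicontinuous (fun q : V × Euc m => f q.1 q.2 - ⟪q.2, ξ₀⟫) := by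
    have hcont : Continuous (fun q : V × Euc m => -⟪q.2, ξ₀⟫) :=
      (continuous_snd.inner continuous_const).neg
    have := hf.add hcont.lowerSemicontinuous
    simpa [sub_eq_add_neg] using this
  have hOopen : IsOpen {q : V × Euc m | l₀ - δ₀ < f q.1 q.2 - ⟪q.2, ξ₀⟫} :=
    hGlsc.isOpen_preimage (l₀ - δ₀)
  have hsub : ({t₀} ×ˢ Metric.closedBall (0 : Euc m) R) ⊆
      {q : V × Euc m | l₀ - δ₀ < f q.1 q.2 - ⟪q.2, ξ₀⟫} := by
    rintro ⟨t, v⟩ ⟨ht, _⟩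
    simp only [mem_singleton_iff] at ht
    subst ht
    have h1 := hQ₀' v
    have hcomm : ⟪v, ξ₀⟫ = ⟪ξ₀, v⟫ := real_inner_comm _ _
    simp only [mem_setOf_eq]
    linarith
  obtain ⟨U, Vo, hUopen, hVoopen, hUsub, hKsub, hUV⟩ :=
    generalized_tube_lemma isCompact_singleton (isCompact_closedBall (0:Euc m) R) hOopen hsub
  have ht₀U : t₀ ∈ U := hUsub rfl
  refine mem_of_superset (inter_mem (hUopen.mem_nhds ht₀U) hs) ?_
  rintro t ⟨htU, hts⟩
  by_contra hcon
  have hemp : ∀ q : Euc m × ℝ, q ∈ Qmap f t → q ∉ Metric.ball ((ξ₀, l₀) : Euc m × ℝ) ε := by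
    intro q hq hqb
    exact hcon ⟨q, hq, hballW hqb⟩
  have hCt : f t 0 ≤ C := le_trans (le_abs_self _) (hC t hts)
  have hC0 : 0 ≤ C := le_trans (hnonneg t 0) hCt
  -- Minkowski sum
  have hAopen : IsOpen (Qmap f t + Metric.ball (0 : Euc m × ℝ) ε) :=
    IsOpen.add_left Metric.isOpen_ball
  have hAconv : Convex ℝ (Qmap f t + Metric.ball (0 : Euc m × ℝ) ε) :=
    (convex_Qmap f t).add (convex_ball _ _)
  have hnotin : ((ξ₀, l₀) : Euc m × ℝ) ∉ Qmap f t + Metric.ball (0 : Euc m × ℝ) ε := by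
    intro hmemA
    rw [Set.mem_add] at hmemA
    obtain ⟨q, hq, b, hb, hqb⟩ := hmemA
    refine hemp q hq ?_
    rw [Metric.mem_ball, ← hqb, dist_eq_norm]
    simpa using mem_ball_zero_iff.mp hb
  obtain ⟨φ, hφ⟩ := geometric_hahn_banach_point_open hAconv hAopen hnotin
  have hφ' : ∀ q ∈ Qmap f t, ∀ b : Euc m × ℝ, ‖b‖ < ε → φ (ξ₀, l₀) < φ q + φ b := by
    intro q hq b hb
    have hmem : q + b ∈ Qmap f t + Metric.ball (0 : Euc m × ℝ) ε :=
      Set.add_mem_add hq (mem_ball_zero_iff.mpr hb)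
    have := hφ _ hmem
    rwa [map_add] at this
  -- decompose φ
  set sc : ℝ := φ ((0:Euc m), (1:ℝ)) with hscdef
  set aL : Euc m →L[ℝ] ℝ := φ.comp (ContinuousLinearMap.inl ℝ (Euc m) ℝ) with haLdef
  set w : Euc m := (InnerProductSpace.toDual ℝ (Euc m)).symm aL with hwdef
  have hw : ∀ x : Euc m, ⟪w, x⟫ = φ (x, 0) := by
    intro x
    rw [hwdef, InnerProductSpace.toDual_symm_apply]
    rfl
  have hrep : ∀ (x : Euc m) (y : ℝ), φ (x, y) = ⟪w, x⟫ + y * sc := by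
    intro x y
    have hxy : ((x, y) : Euc m × ℝ) = (x, 0) + y • ((0:Euc m), (1:ℝ)) := by
      simp [Prod.ext_iff]
    rw [hxy, map_add, _root_.map_smul, smul_eq_mul, hw, hscdef]
  have hzeromem : ∀ μ : ℝ, 0 ≤ μ → (((0:Euc m), -μ) : Euc m × ℝ) ∈ Qmap f t := by
    intro μ hμ
    rw [mem_Qmap_iff]
    intro x
    simp only [inner_zero_left]
    linarith [hnonneg t x]
  have hb00 : ‖(((0:Euc m), (0:ℝ)) : Euc m × ℝ)‖ < ε := by
    have : (((0:Euc m), (0:ℝ)) : Euc m × ℝ) = 0 := rfl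
    rw [this, norm_zero]
    exact hε
  have hφ00 : φ ((0:Euc m), (0:ℝ)) = 0 := by
    have : (((0:Euc m), (0:ℝ)) : Euc m × ℝ) = 0 := rfl
    rw [this, map_zero]
  have hsc : sc ≤ 0 := by
    by_contra hpos
    push_neg at hpos
    set μ := max 0 (-(φ (ξ₀, l₀)) / sc) with hμdef
    have hμ0 : 0 ≤ μ := le_max_left _ _
    have h := hφ' _ (hzeromem μ hμ0) _ hb00
    rw [hφ00, hrep 0 (-μ), inner_zero_right] at h
    have hμge : -(φ (ξ₀, l₀)) / sc ≤ μ := le_max_right _ _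
    have := mul_le_mul_of_nonneg_right hμge hpos.le
    rw [div_mul_cancel₀ _ (ne_of_gt hpos)] at this
    nlinarith
  set M := max ‖w‖ (-sc) with hMdef
  have hM0 : 0 < M := by
    rcases lt_or_ge 0 M with h | h
    · exact h
    exfalso
    have hw0 : w = 0 := norm_le_zero_iff.mp (le_trans (le_max_left _ _) h)
    have hsc0 : sc = 0 := by
      have := le_trans (le_max_right ‖w‖ (-sc)) h
      linarith
    have h0 := hφ' _ (hzeromem 0 le_rfl) _ hb00
    rw [hφ00, hrep 0 (-0), hrep ξ₀ l₀, hw0, hsc0] at h0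
    simp [inner_zero_left] at h0
  -- the gap vector
  have hgapex : ∃ b : Euc m × ℝ, ‖b‖ < ε ∧ φ b = -(γ * M) := by
    rcases le_or_gt (-sc) ‖w‖ with h | h
    · have hMw : M = ‖w‖ := max_eq_left h
      have hw0 : (0:ℝ) < ‖w‖ := hMw ▸ hM0
      refine ⟨((-(γ / ‖w‖)) • w, 0), ?_, ?_⟩
      · rw [Prod.norm_def]
        simp only [norm_smul, norm_neg, norm_zero, Real.norm_eq_abs, abs_div,
          abs_of_pos hγ0, abs_of_pos hw0]
        rw [div_mul_cancel₀ _ (ne_of_gt hw0)]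
        simp only [max_lt_iff]
        exact ⟨hγε, hε⟩
      · rw [hrep, real_inner_smul_right, real_inner_self_eq_norm_mul_norm]
        rw [hMw]
        field_simp
        ring
    · have hMs : M = -sc := max_eq_right h.le
      refine ⟨((0:Euc m), γ), ?_, ?_⟩
      · rw [Prod.norm_def]
        simp only [norm_zero, Real.norm_eq_abs, abs_of_pos hγ0]
        simp only [max_lt_iff]
        exact ⟨hε, hγε⟩
      · rw [hrep, inner_zero_right, hMs]
        ring
  obtain ⟨b, hbnorm, hbval⟩ := hgapex
  have hkey : ∀ q ∈ Qmap f t, φ (ξ₀, l₀) + γ * M ≤ φ q := by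
    intro q hq
    have := hφ' q hq b hbnorm
    rw [hbval] at this
    linarith
  -- normalized data
  set s2 : ℝ := (-sc) / M with hs2def
  have hs20 : 0 ≤ s2 := div_nonneg (by linarith) hM0.le
  have hs21 : s2 ≤ 1 := by
    rw [hs2def, div_le_one hM0]
    exact le_max_right _ _
  have hscM : sc = -(M * s2) := by
    rw [hs2def]
    field_simp
  set ρ := max s2 R⁻¹ with hρdef
  have hρ0 : 0 < ρ := lt_of_lt_of_le (inv_pos.mpr hR0) (le_max_right _ _)
  have hs2ρ : s2 ≤ ρ := le_max_left _ _
  have hρ1 : ρ ≤ 1 := by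
    refine max_le hs21 ?_
    rw [inv_le_one_iff₀]
    right; exact hR1
  set p' : Euc m := (-(M⁻¹)) • w with hp'def
  set v : Euc m := ρ⁻¹ • p' with hvdef
  have hpv : p' = ρ • v := by
    rw [hvdef, smul_smul, mul_inv_cancel₀ (ne_of_gt hρ0), one_smul]
  have hp'norm : ‖p'‖ ≤ 1 := by
    rw [hp'def, norm_smul, norm_neg, Real.norm_eq_abs, abs_of_pos (inv_pos.mpr hM0)]
    calc M⁻¹ * ‖w‖ ≤ M⁻¹ * M := mul_le_mul_of_nonneg_left (le_max_left _ _) (inv_pos.mpr hM0).le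
      _ = 1 := inv_mul_cancel₀ (ne_of_gt hM0)
  have hvnorm : ‖v‖ ≤ R := by
    rw [hvdef, norm_smul, Real.norm_eq_abs, abs_of_pos (inv_pos.mpr hρ0)]
    have h1 : ρ⁻¹ ≤ R := by
      have := inv_anti₀ (inv_pos.mpr hR0) (le_max_right s2 R⁻¹)
      rwa [inv_inv] at this
    calc ρ⁻¹ * ‖p'‖ ≤ ρ⁻¹ * 1 := mul_le_mul_of_nonneg_left hp'norm (inv_pos.mpr hρ0).le
      _ ≤ R := by rwa [mul_one]
  clear_value γ R δ₀ sc aL w M s2 ρ p' v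
  -- the subgradient at v
  obtain ⟨ξs, hξs⟩ := exists_subgradient (f t) (hconv t) v
  set ls := f t v - ⟪ξs, v⟫ with hlsdef
  have hqsmem : ((ξs, ls) : Euc m × ℝ) ∈ Qmap f t := by
    rw [mem_Qmap_iff]
    intro x
    have := hξs x
    simp only
    linarith
  clear_value ls
  have hlsC : ls ≤ C := by
    have h := (mem_Qmap_iff f t _).mp hqsmem 0
    simp only [inner_zero_right] at h
    linarith
  -- rewrite the key inequality
  have hk := hkey _ hqsmem
  rw [hrep ξ₀ l₀, hrep ξs ls] at hk
  have hwx : ∀ x : Euc m, ⟪w, x⟫ = -(M * (ρ * ⟪v, x⟫)) := by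
    intro x
    have h1 : ⟪p', x⟫ = -(M⁻¹) * ⟪w, x⟫ := by rw [hp'def, real_inner_smul_left]
    have h2 : ⟪p', x⟫ = ρ * ⟪v, x⟫ := by rw [hpv, real_inner_smul_left]
    have h3 : -(M⁻¹) * ⟪w, x⟫ = ρ * ⟪v, x⟫ := by rw [← h1, h2]
    have hMne : (M:ℝ) ≠ 0 := ne_of_gt hM0
    have h4 := congrArg (fun z => M * z) h3
    have e : M * (-(M⁻¹) * ⟪w, x⟫) = -⟪w, x⟫ := by
      rw [neg_mul, mul_neg, ← mul_assoc, mul_inv_cancel₀ hMne, one_mul]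
    rw [e] at h4
    linarith
  rw [hwx ξ₀, hwx ξs, hscM] at hk
  have hkey2 : ρ * ⟪v, ξs⟫ + s2 * ls ≤ ρ * ⟪v, ξ₀⟫ + s2 * l₀ - γ := by
    have hk' : M * (ρ * ⟪v, ξs⟫ + s2 * ls) ≤ M * (ρ * ⟪v, ξ₀⟫ + s2 * l₀ - γ) := by linarith [hk]
    exact le_of_mul_le_mul_left hk' hM0
  -- membership in the tube
  have hOtv : l₀ - δ₀ < f t v - ⟪v, ξ₀⟫ := by
    have hmem : ((t, v) : V × Euc m) ∈ U ×ˢ Vo :=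
      ⟨htU, hKsub (by rwa [mem_closedBall_zero_iff])⟩
    have := hUV hmem
    simpa using this
  -- final contradiction
  clear hf hbd hC hQ₀' hGlsc hOopen hsub hUV hKsub hUsub hcon hemp hAopen hAconv hnotin
  clear hzeromem hb00 hqsmem hξs hk hkey hφ' hφ hbval hbnorm hrep hw hφ00 hscM hs2def hMdef
  clear hsc hscdef hwdef haLdef hp'def hpv hvdef hp'norm hvnorm hwx b φ aL w sc M hM0 hγdef hδ₀def hRdef p'
  have h4 : (ρ - s2) * ls ≤ (ρ - s2) * C :=
    mul_le_mul_of_nonneg_left hlsC (sub_nonneg.mpr hs2ρ)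
  have hfvρ : ρ * f t v = ρ * ⟪v, ξs⟫ + ρ * ls := by
    rw [hlsdef, real_inner_comm v ξs]
    ring
  have h6 : ρ * (l₀ - δ₀) < ρ * (f t v - ⟪v, ξ₀⟫) := mul_lt_mul_of_pos_left hOtv hρ0
  have hdagger : 0 < (ρ - s2) * (C - l₀) - γ + ρ * δ₀ := by nlinarith [hkey2, h4, hfvρ, h6]
  rcases max_cases s2 R⁻¹ with ⟨hm1, hm2⟩ | ⟨hm1, hm2⟩
  · -- ρ = s2
    have hρs : ρ = s2 := by rw [hρdef, hm1]
    rw [hρs] at hdagger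
    have hle : s2 * δ₀ ≤ δ₀ := by nlinarith
    nlinarith
  · -- ρ = R⁻¹
    have hρs : ρ = R⁻¹ := by rw [hρdef, hm1]
    rw [hρs] at hdagger
    have e1 : R * ((R⁻¹ - s2) * (C - l₀) - γ + R⁻¹ * δ₀)
        = (1 - R * s2) * (C - l₀) - γ * R + δ₀ := by
      field_simp
    have hd2 : 0 < (1 - R * s2) * (C - l₀) - γ * R + δ₀ := by
      have := mul_pos hR0 hdagger
      rwa [e1] at this
    have hu0 : 0 ≤ 1 - R * s2 := by
      have : R * s2 ≤ R * R⁻¹ := mul_le_mul_of_nonneg_left hm2.le hR0.le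
      rw [mul_inv_cancel₀ (ne_of_gt hR0)] at this
      linarith
    have hu1 : 1 - R * s2 ≤ 1 := by nlinarith [mul_nonneg hR0.le hs20]
    have hmx1 : (0:ℝ) ≤ max 0 (C - l₀) := le_max_left _ _
    have hmx2 : C - l₀ ≤ max 0 (C - l₀) := le_max_right _ _
    have hprod : (1 - R * s2) * (C - l₀) ≤ max 0 (C - l₀) := by nlinarith
    linarith

/-- Proposition 8: for nonempty `V ⊆ ℝⁿ` and `f : V × ℝᵐ → ℝ` nonnegative,
convex in the second variable and with `t ↦ f(t,0)` locally bounded, lower semicontinuity of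
`f` (jointly in both variables) is equivalent to inner semicontinuity of the set-valued
mapping `Q(t) = {(ξ,λ) : λ + f*(t,ξ) ≤ 0}`. -/
theorem stmt3 (n m : ℕ) (V : Set (Euc n)) (hV : V.Nonempty) (f : V → Euc m → ℝ)
    (hnonneg : ∀ t p, 0 ≤ f t p)
    (hconv : ∀ t : V, ConvexOn ℝ Set.univ (f t))
    (hbd : ∀ t : V, ∃ s ∈ 𝓝 t, ∃ C : ℝ, ∀ t' ∈ s, |f t' 0| ≤ C) :
    LowerSemicontinuous (fun q : V × Euc m => f q.1 q.2) ↔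
      InnerSemicontinuous (Qmap f) :=
  ⟨fun hf => dir1 V f hnonneg hconv hbd hf, fun hQ => dir2 V f hconv hQ⟩
end
end

section
/- Let Ω ⊂ ℝ^d be open and bounded, Γ ⊂ ℝ^s compact, U := Ω × Γ, u ∈ C¹(Ω, Γ), μ = δ_u, and let E ∈ ℳ(U, ℝ^{d×s}) be absolutely continuous with respect to μ with density w := dE/dμ ∈ L¹_μ(U, ℝ^{d×s}). If (E, μ) satisfies the first-order continuity equation ∇_x μ + div_z E = 0 in the weak sense, then w(x, u(x)) = ∇u(x) holds almost everywhere on the support of μ, i.e., E = ∇u δ_u. -/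
open MeasureTheory Filter Topology Set
open scoped ENNReal NNReal

noncomputable section

/-- The `i`-th standard basis vector of `ℝ^k`. -/
def ex (k : ℕ) (i : Fin k) : Euc k := EuclideanSpace.single i 1

/-- The test functions for the first-order continuity equation: continuously differentiable
`φ : Ω × Γ → ℝ^d` (defined on the ambient product space) with compact support in the first
variable contained in `Ω`. -/
def Test1 (d s : ℕ) (Ω : Set (Euc d)) : Set ((Euc d × Euc s) → Euc d) :=
  {φ | ContDiff ℝ 1 φ ∧ ∃ K : Set (Euc d), IsCompact K ∧ K ⊆ Ω ∧
    ∀ x z, x ∉ K → φ (x, z) = 0}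

/-- Proposition 15: let `u ∈ C¹(Ω, Γ)`, `μ = δ_u` and let
`E ∈ ℳ(U, ℝ^{d×s})` be absolutely continuous with respect to `μ` with density
`w = dE/dμ ∈ L¹_μ`, so that the pairing of `E` with a field `ψ` is
`∫_Ω ⟨ψ(x,u(x)), w(x,u(x))⟩ dx`.  If `(E, μ)` satisfies the first-order continuity equation
weakly, then `w(x, u(x)) = ∇u(x)` for a.e. `x ∈ Ω` (i.e. a.e. on the support of `μ`),
that is, `E = ∇u δ_u`. -/
theorem stmt10 (d s : ℕ) (Ω : Set (Euc d)) (hΩo : IsOpen Ω) (hΩb : Bornology.IsBounded Ω)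
    (Γ : Set (Euc s)) (hΓ : IsCompact Γ)
    (u : Euc d → Euc s) (hu1 : ContDiffOn ℝ 1 u Ω) (huΓ : Set.MapsTo u Ω Γ)
    (w : (Euc d × Euc s) → Fin d → Fin s → ℝ)
    (hwint : Integrable (fun x => w (x, u x)) (volume.restrict Ω))
    (heq : ∀ φ ∈ Test1 d s Ω,
      (∫ x in Ω, ∑ i : Fin d, (fderiv ℝ φ (x, u x) (ex d i, 0)) i)
        + (∫ x in Ω, ∑ i : Fin d, ∑ k : Fin s,
            (fderiv ℝ φ (x, u x) ((0 : Euc d), ex s k)) i * w (x, u x) i k)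
        = 0) :
    ∀ᵐ x ∂(volume.restrict Ω), ∀ i : Fin d, ∀ k : Fin s,
      w (x, u x) i k = (fderiv ℝ u x (ex d i)) k := by
  classical
  have hΩm : MeasurableSet Ω := hΩo.measurableSet
  have coord_le : ∀ (v : Euc s) (kk : Fin s), |v kk| ≤ ‖v‖ := by
    intro v kk
    rw [EuclideanSpace.norm_eq, ← Real.sqrt_sq_eq_abs]
    apply Real.sqrt_le_sqrt
    simpa [Real.norm_eq_abs, sq_abs] using
      Finset.single_le_sum (f := fun j => ‖v j‖ ^ 2) (fun j _ => sq_nonneg _) (Finset.mem_univ kk)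
  obtain ⟨C, hC⟩ : ∃ C, ∀ z ∈ Γ, ‖z‖ ≤ C := hΓ.isBounded.exists_norm_le
  have hDu : ContinuousOn (fderiv ℝ u) Ω := hu1.continuousOn_fderiv_of_isOpen hΩo le_rfl
  have huc : ContinuousOn u Ω := hu1.continuousOn
  have hudiff : ∀ x ∈ Ω, HasFDerivAt u (fderiv ℝ u x) x := fun x hx =>
    ((hu1.contDiffAt (hΩo.mem_nhds hx)).differentiableAt one_ne_zero).hasFDerivAt
  have key : ∀ (i : Fin d) (k : Fin s), ∀ᵐ x ∂(volume : Measure (Euc d)), x ∈ Ω →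
      w (x, u x) i k - (fderiv ℝ u x (ex d i)) k = 0 := by
    intro i k
    have hwik : Integrable (fun x => w (x, u x) i k) (volume.restrict Ω) := by
      have := ((ContinuousLinearMap.proj (R := ℝ) (φ := fun _ : Fin s => ℝ) k).comp
        (ContinuousLinearMap.proj (R := ℝ) (φ := fun _ : Fin d => (Fin s → ℝ)) i)).integrable_comp
        hwint
      simpa using this
    have hDuk : ContinuousOn (fun x => fderiv ℝ u x (ex d i) k) Ω := by
      have h1 : ContinuousOn (fun x => fderiv ℝ u x (ex d i)) Ω :=
        (ContinuousLinearMap.apply ℝ (Euc s) (ex d i)).continuous.comp_continuousOn hDu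
      exact (EuclideanSpace.proj (𝕜 := ℝ) k).continuous.comp_continuousOn h1
    apply hΩo.ae_eq_zero_of_integral_contDiff_smul_eq_zero
    · exact (MeasureTheory.IntegrableOn.locallyIntegrableOn hwik).sub (hDuk.locallyIntegrableOn hΩm)
    intro g hg hgsupp hgΩ
    have hg1 : ContDiff ℝ 1 g := hg.of_le (by exact_mod_cast le_top)
    have hgd : ∀ x, HasFDerivAt g (fderiv ℝ g x) x := fun x =>
      (hg1.differentiable one_ne_zero).differentiableAt.hasFDerivAt
    -- the three integrands
    set fa : Euc d → ℝ := fun x => u x k * fderiv ℝ g x (ex d i) with hfa_def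
    set fb : Euc d → ℝ := fun x => g x * fderiv ℝ u x (ex d i) k with hfb_def
    set fc : Euc d → ℝ := fun x => g x * w (x, u x) i k with hfc_def
    -- integrability
    obtain ⟨Cg, hCg⟩ : ∃ C, ∀ x, ‖g x‖ ≤ C := hgsupp.exists_bound_of_continuous hg1.continuous
    have humeask : AEStronglyMeasurable (fun x => u x k) (volume.restrict Ω) := by
      have : ContinuousOn (fun x => u x k) Ω :=
        (EuclideanSpace.proj (𝕜 := ℝ) k).continuous.comp_continuousOn huc
      exact this.aestronglyMeasurable hΩm
    have hfa : Integrable fa (volume.restrict Ω) := by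
      have hbase : Integrable (fun x => fderiv ℝ g x (ex d i)) (volume.restrict Ω) := by
        have hcont : Continuous (fun x => fderiv ℝ g x (ex d i)) :=
          (ContinuousLinearMap.apply ℝ ℝ (ex d i)).continuous.comp
            (hg.continuous_fderiv (by simp))
        exact (hcont.integrable_of_hasCompactSupport
          ((hgsupp.fderiv ℝ).comp_left (g := fun L : Euc d →L[ℝ] ℝ => L (ex d i)) rfl)).restrict
      refine hbase.bdd_mul (c := C) humeask ?_
      filter_upwards [ae_restrict_mem hΩm] with x hx
      calc ‖u x k‖ = |u x k| := rfl
        _ ≤ ‖u x‖ := coord_le _ _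
        _ ≤ C := hC _ (huΓ hx)
    have hfc : Integrable fc (volume.restrict Ω) :=
      hwik.bdd_mul (c := Cg) (hg1.continuous.aestronglyMeasurable) (Filter.Eventually.of_forall hCg)
    have hfb : Integrable fb (volume.restrict Ω) := by
      have hKm : MeasurableSet (tsupport g) := (isClosed_tsupport g).measurableSet
      have h1 : IntegrableOn fb (tsupport g) volume := by
        refine ContinuousOn.integrableOn_compact hgsupp ?_
        exact (hg1.continuous.continuousOn).mul (hDuk.mono hgΩ)
      have h2 : IntegrableOn fb (Ω \ tsupport g) volume := by
        refine (integrableOn_zero).congr_fun (fun x hx => ?_) (hΩm.diff hKm)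
        simp [hfb_def, image_eq_zero_of_notMem_tsupport hx.2]
      have : IntegrableOn fb (tsupport g ∪ (Ω \ tsupport g)) volume := h1.union h2
      refine this.mono_set (fun x hx => ?_)
      by_cases hxK : x ∈ tsupport g
      · exact Or.inl hxK
      · exact Or.inr ⟨hx, hxK⟩
    -- the first test function φ₁
    set d' : (Euc d × Euc s) →L[ℝ] ℝ :=
      (EuclideanSpace.proj (𝕜 := ℝ) k).comp (ContinuousLinearMap.snd ℝ (Euc d) (Euc s)) with hd'
    have hφ₁d : ∀ p : Euc d × Euc s, HasFDerivAt
        (fun p : Euc d × Euc s => (g p.1 * p.2 k) • ex d i)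
        (((g p.1 • d' + p.2 k • ((fderiv ℝ g p.1).comp
          (ContinuousLinearMap.fst ℝ (Euc d) (Euc s))))).smulRight (ex d i)) p := by
      intro p
      have hc : HasFDerivAt (fun p : Euc d × Euc s => g p.1)
          ((fderiv ℝ g p.1).comp (ContinuousLinearMap.fst ℝ (Euc d) (Euc s))) p :=
        (hgd p.1).comp p hasFDerivAt_fst
      have hd : HasFDerivAt (fun p : Euc d × Euc s => p.2 k) d' p := d'.hasFDerivAt
      exact (hc.mul hd).smul_const (ex d i)
    have hφ₁mem : (fun p : Euc d × Euc s => (g p.1 * p.2 k) • ex d i) ∈ Test1 d s Ω := by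
      refine ⟨?_, tsupport g, hgsupp, hgΩ, fun x z hx => by
        simp [image_eq_zero_of_notMem_tsupport hx]⟩
      exact ((hg1.comp contDiff_fst).mul
        ((EuclideanSpace.proj (𝕜 := ℝ) k).contDiff.comp contDiff_snd)).smul contDiff_const
    have heq1 := heq _ hφ₁mem
    have hsum11 : ∀ x : Euc d, (∑ i' : Fin d,
        (fderiv ℝ (fun p : Euc d × Euc s => (g p.1 * p.2 k) • ex d i) (x, u x) (ex d i', 0)) i')
        = fa x := by
      intro x
      rw [(hφ₁d (x, u x)).fderiv]
      simp [hd', ex, EuclideanSpace.single_apply, Finset.sum_ite_eq, mul_ite, fa]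
    have hsum12 : ∀ x : Euc d, (∑ i' : Fin d, ∑ k' : Fin s,
        (fderiv ℝ (fun p : Euc d × Euc s => (g p.1 * p.2 k) • ex d i) (x, u x)
          ((0 : Euc d), ex s k')) i' * w (x, u x) i' k') = fc x := by
      intro x
      rw [(hφ₁d (x, u x)).fderiv]
      simp [hd', ex, EuclideanSpace.single_apply, Finset.sum_ite_eq, mul_ite, fc]
      simp [apply_ite (fun v : Euc d => v.ofLp), ite_apply, Pi.single_apply, mul_ite, Finset.sum_ite_eq, Finset.sum_ite_eq']
    simp only [hsum11, hsum12] at heq1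
    -- the second test function φ₂
    have hG : ContDiff ℝ 1 (fun x : Euc d => g x * u x k) := by
      rw [contDiff_iff_contDiffAt]
      intro x
      by_cases hx : x ∈ Ω
      · have hu' : ContDiffAt ℝ 1 u x := hu1.contDiffAt (hΩo.mem_nhds hx)
        have huk : ContDiffAt ℝ 1 (fun y => u y k) x :=
          (EuclideanSpace.proj (𝕜 := ℝ) k).contDiff.contDiffAt.comp x hu'
        exact hg1.contDiffAt.mul huk
      · have hx' : x ∈ (tsupport g)ᶜ := fun hmem => hx (hgΩ hmem)
        have hev : (fun x : Euc d => g x * u x k) =ᶠ[𝓝 x] (fun _ => 0) := by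
          filter_upwards [(isClosed_tsupport g).isOpen_compl.mem_nhds hx'] with y hy
          simp [image_eq_zero_of_notMem_tsupport hy]
        exact (contDiffAt_const (c := (0:ℝ))).congr_of_eventuallyEq hev
    have hDG : ∀ x ∈ Ω, HasFDerivAt (fun y : Euc d => g y * u y k)
        (g x • ((EuclideanSpace.proj (𝕜 := ℝ) k).comp (fderiv ℝ u x))
          + u x k • fderiv ℝ g x) x := by
      intro x hx
      have huk : HasFDerivAt (fun y : Euc d => u y k)
          ((EuclideanSpace.proj (𝕜 := ℝ) k).comp (fderiv ℝ u x)) x :=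
        ((EuclideanSpace.proj (𝕜 := ℝ) k).hasFDerivAt).comp x (hudiff x hx)
      exact (hgd x).mul huk
    have hφ₂d : ∀ x ∈ Ω, HasFDerivAt
        (fun p : Euc d × Euc s => (g p.1 * u p.1 k) • ex d i)
        ((((g x • ((EuclideanSpace.proj (𝕜 := ℝ) k).comp (fderiv ℝ u x))
          + u x k • fderiv ℝ g x)).smulRight (ex d i)).comp
          (ContinuousLinearMap.fst ℝ (Euc d) (Euc s))) (x, u x) := fun x hx =>
      by
        have h := ((hDG x hx).smul_const (ex d i)).comp (x, u x) (hasFDerivAt_fst (𝕜 := ℝ) (p := (x, u x)))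
        exact h
    have hφ₂mem : (fun p : Euc d × Euc s => (g p.1 * u p.1 k) • ex d i) ∈ Test1 d s Ω := by
      refine ⟨(hG.comp contDiff_fst).smul contDiff_const, tsupport g, hgsupp, hgΩ,
        fun x z hx => by simp [image_eq_zero_of_notMem_tsupport hx]⟩
    have heq2 := heq _ hφ₂mem
    have hsum21 : Set.EqOn (fun x => ∑ i' : Fin d,
        (fderiv ℝ (fun p : Euc d × Euc s => (g p.1 * u p.1 k) • ex d i) (x, u x)
          (ex d i', 0)) i') (fun x => fa x + fb x) Ω := by
      intro x hx
      dsimp only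
      rw [(hφ₂d x hx).fderiv]
      simp [ex, EuclideanSpace.single_apply, Finset.sum_ite_eq, mul_ite, fa, fb]
      ring
    have hsum22 : Set.EqOn (fun x => ∑ i' : Fin d, ∑ k' : Fin s,
        (fderiv ℝ (fun p : Euc d × Euc s => (g p.1 * u p.1 k) • ex d i) (x, u x)
          ((0 : Euc d), ex s k')) i' * w (x, u x) i' k') (fun _ => (0:ℝ)) Ω := by
      intro x hx
      dsimp only
      rw [(hφ₂d x hx).fderiv]
      simp
    rw [setIntegral_congr_fun hΩm hsum21, setIntegral_congr_fun hΩm hsum22,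
      integral_zero, add_zero, integral_add hfa hfb] at heq2
    have hkey : ∫ x in Ω, fc x = ∫ x in Ω, fb x := by linarith
    have hφzero : ∀ x ∉ Ω,
        g x • (w (x, u x) i k - fderiv ℝ u x (ex d i) k) = 0 :=
      fun x hx => by simp [image_eq_zero_of_notMem_tsupport (fun hm => hx (hgΩ hm))]
    rw [← setIntegral_eq_integral_of_forall_compl_eq_zero hφzero]
    have hrw : ∀ x : Euc d,
        g x • (w (x, u x) i k - fderiv ℝ u x (ex d i) k) = fc x - fb x := by
      intro x
      simp only [smul_eq_mul, hfc_def, hfb_def]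
      ring
    simp only [hrw]
    rw [integral_sub hfc hfb, hkey, sub_self]
  have hae : ∀ᵐ x ∂(volume.restrict Ω), ∀ i : Fin d, ∀ k : Fin s,
      w (x, u x) i k - fderiv ℝ u x (ex d i) k = 0 := by
    rw [ae_all_iff]
    intro i
    rw [ae_all_iff]
    intro k
    exact (ae_restrict_iff' hΩm).2 (key i k)
  filter_upwards [hae] with x hx i k
  exact sub_eq_zero.1 (hx i k)
end
end

section
/- Let Ω ⊂ ℝ^d be open and bounded, Γ ⊂ ℝ^s compact, U := Ω × Γ, and let u ∈ C²(Ω, Γ). Define (H, E, μ) ∈ ℳ(U, ℝ^{d×s×d×s} × ℝ^{d×d×s} × ℝ) by μ = δ_u, E = (∇²u) δ_u, and H = (∇u ⊗ ∇u) δ_u, i.e., ∫_U ⟨φ, dH⟩ := ∫_Ω ⟨φ(x, u(x)), (∇u ⊗ ∇u)(x)⟩ dx for all φ ∈ C₀(U, ℝ^{d×s×d×s}). Then (H, E, μ) satisfies the second-order continuity equation −∇_x² μ − div_z E + div_z² H = 0 in the weak sense. -/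
open MeasureTheory Filter Topology Set
open scoped ENNReal NNReal

noncomputable section

/-- The test functions for the second-order continuity equation: twice continuously
differentiable `φ : Ω × Γ → ℝ^{d×d}` (on the ambient product space) with compact support in
the first variable contained in `Ω`. -/
def Test2 (d s : ℕ) (Ω : Set (Euc d)) : Set ((Euc d × Euc s) → Fin d → Fin d → ℝ) :=
  {φ | ContDiff ℝ 2 φ ∧ ∃ K : Set (Euc d), IsCompact K ∧ K ⊆ Ω ∧
    ∀ x z, x ∉ K → φ (x, z) = 0}

open scoped Manifold

set_option maxHeartbeats 1000000

lemma key {d : ℕ} {h : Euc d → ℝ} {h' : Euc d → (Euc d →L[ℝ] ℝ)} {v0 : Euc d}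
    (hd : ∀ x, HasFDerivAt h (h' x) x)
    (h1 : Integrable h) (h2 : Integrable (fun x => h' x v0)) :
    ∫ x, h' x v0 = 0 := by
  have := integral_bilinear_hasFDerivAt_right_eq_neg_left_of_integrable
    (μ := (volume : Measure (Euc d)))
    (f := fun _ => (1:ℝ)) (f' := fun _ => 0) (g := h) (g' := h') (v := v0)
    (B := ContinuousLinearMap.mul ℝ ℝ) (by simp)
    (by simpa using h2) (by simpa using h1) (fun x _ => hasFDerivAt_const _ _) (fun x _ => hd x)
  simpa using this

lemma sum_coord_smul {s : ℕ} {G : Type*} [NormedAddCommGroup G] [NormedSpace ℝ G]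
    (L : Euc s →L[ℝ] G) (y : Euc s) :
    ∑ k, y k • L (ex s k) = L y := by
  have hy : y = ∑ k, y k • (EuclideanSpace.single k (1:ℝ) : Euc s) := by
    have := (EuclideanSpace.basisFun (Fin s) ℝ).sum_repr y
    simpa [EuclideanSpace.basisFun_apply, EuclideanSpace.basisFun_repr] using this.symm
  conv_rhs => rw [hy]
  rw [map_sum]
  simp [ex]

lemma collapse1 {d s : ℕ} (T : (Euc d × Euc s) →L[ℝ] (Fin d → Fin d → ℝ)) (i j : Fin d)
    (y : Euc s) :
    ∑ k, (T ((0 : Euc d), ex s k)) i j * y k = (T (0, y)) i j := by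
  have h := sum_coord_smul ((ContinuousLinearMap.proj j).comp
    ((ContinuousLinearMap.proj i).comp (T.comp (ContinuousLinearMap.inr ℝ (Euc d) (Euc s))))) y
  simp only [ContinuousLinearMap.comp_apply, ContinuousLinearMap.inr_apply,
    ContinuousLinearMap.proj_apply, smul_eq_mul] at h
  rw [← h]
  exact Finset.sum_congr rfl fun k _ => by ring

lemma collapse2 {d s : ℕ}
    (T : (Euc d × Euc s) →L[ℝ] ((Euc d × Euc s) →L[ℝ] (Fin d → Fin d → ℝ))) (i j : Fin d)
    (a b : Euc s) :
    ∑ k, ∑ l, (T ((0:Euc d), ex s k) ((0:Euc d), ex s l)) i j * a k * b l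
      = (T (0, a) (0, b)) i j := by
  have inner : ∀ k, ∑ l, (T ((0:Euc d), ex s k) ((0:Euc d), ex s l)) i j * a k * b l
      = (T ((0:Euc d), ex s k) ((0:Euc d), b)) i j * a k := by
    intro k
    rw [← collapse1 (T ((0:Euc d), ex s k)) i j b, Finset.sum_mul]
    exact Finset.sum_congr rfl fun l _ => by ring
  simp only [inner]
  have h := collapse1 (T.flip ((0:Euc d), b)) i j a
  simp only [ContinuousLinearMap.flip_apply] at h
  exact h

lemma expand2 {d s : ℕ}
    (T : (Euc d × Euc s) →L[ℝ] ((Euc d × Euc s) →L[ℝ] (Fin d → Fin d → ℝ)))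
    (e₁ e₂ : Euc d) (z₁ z₂ : Euc s) (i j : Fin d) :
    (T (e₁, z₁) (e₂, z₂)) i j
      = (T (e₁,0) (e₂,0)) i j + (T (e₁,0) ((0:Euc d),z₂)) i j
        + (T ((0:Euc d),z₁) (e₂,0)) i j + (T ((0:Euc d),z₁) ((0:Euc d),z₂)) i j := by
  have h1 : ((e₁, z₁) : Euc d × Euc s) = (e₁,(0:Euc s)) + ((0:Euc d), z₁) := by
    simp [Prod.mk_add_mk]
  have h2 : ((e₂, z₂) : Euc d × Euc s) = (e₂,(0:Euc s)) + ((0:Euc d), z₂) := by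
    simp [Prod.mk_add_mk]
  rw [h1, h2, map_add]
  simp only [ContinuousLinearMap.add_apply, map_add, Pi.add_apply]
  ring

lemma fderiv_phi_zero {d s : ℕ} {φ : Euc d × Euc s → Fin d → Fin d → ℝ} {K : Set (Euc d)}
    (hK : IsClosed K) (hφK : ∀ x z, x ∉ K → φ (x, z) = 0) :
    ∀ p : Euc d × Euc s, p.1 ∉ K → fderiv ℝ φ p = 0 ∧ fderiv ℝ (fderiv ℝ φ) p = 0 := by
  have hUo : IsOpen ((Kᶜ : Set (Euc d)) ×ˢ (univ : Set (Euc s))) :=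
    hK.isOpen_compl.prod isOpen_univ
  have h1 : ∀ p : Euc d × Euc s, p.1 ∉ K → fderiv ℝ φ p = 0 := by
    intro p hp
    have hev : φ =ᶠ[𝓝 p] (fun _ => 0) := by
      filter_upwards [hUo.mem_nhds ⟨hp, mem_univ _⟩] with q hq
      simpa using hφK q.1 q.2 hq.1
    rw [hev.fderiv_eq]
    exact fderiv_const_apply 0
  intro p hp
  refine ⟨h1 p hp, ?_⟩
  have hev : fderiv ℝ φ =ᶠ[𝓝 p] (fun _ => 0) := by
    filter_upwards [hUo.mem_nhds ⟨hp, mem_univ _⟩] with q hq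
    exact h1 q hq.1
  rw [hev.fderiv_eq]
  exact fderiv_const_apply 0

lemma exists_global {d s : ℕ} {Ω : Set (Euc d)} (hΩo : IsOpen Ω) {K : Set (Euc d)}
    (hK : IsCompact K) (hKΩ : K ⊆ Ω) {u : Euc d → Euc s} (hu2 : ContDiffOn ℝ 2 u Ω) :
    ∃ v : Euc d → Euc s, ContDiff ℝ 2 v ∧ ∀ x ∈ K,
      u x = v x ∧ fderiv ℝ u x = fderiv ℝ v x ∧
      fderiv ℝ (fderiv ℝ u) x = fderiv ℝ (fderiv ℝ v) x := by
  obtain ⟨K₁, hK₁, hKK₁, hK₁Ω⟩ := exists_compact_between hK hΩo hKΩ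
  obtain ⟨K₂, hK₂, hK₁K₂, hK₂Ω⟩ := exists_compact_between hK₁ hΩo hK₁Ω
  obtain ⟨χ, hχ2, hχ0, hχ1⟩ : ∃ χ : Euc d → ℝ, ContDiff ℝ 2 χ ∧
      EqOn χ 0 (interior K₂)ᶜ ∧ EqOn χ 1 K₁ := by
    obtain ⟨f, h0, h1, -⟩ := exists_contMDiffMap_zero_one_of_isClosed (𝓘(ℝ, Euc d)) (n := 2)
      (isOpen_interior.isClosed_compl) hK₁.isClosed
      (disjoint_left.mpr fun x hx hx' => hx (hK₁K₂ hx'))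
    refine ⟨f, ?_, h0, h1⟩
    have := f.contMDiff
    rw [contMDiff_iff_contDiff] at this
    exact this.of_le (by norm_cast)
  set v : Euc d → Euc s := fun x => χ x • u x with hvdef
  have hvC : ContDiff ℝ 2 v := by
    rw [contDiff_iff_contDiffAt]
    intro x
    by_cases hx : x ∈ Ω
    · exact (hχ2.contDiffAt).smul (hu2.contDiffAt (hΩo.mem_nhds hx))
    · have hxK : x ∈ (K₂)ᶜ := fun h => hx (hK₂Ω h)
      have hev : v =ᶠ[𝓝 x] (fun _ => (0 : Euc s)) := by
        filter_upwards [hK₂.isClosed.isOpen_compl.mem_nhds hxK] with y hy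
        have : χ y = 0 := hχ0 (fun h => hy (interior_subset h))
        simp [hvdef, this]
      exact (contDiffAt_const (c := (0 : Euc s))).congr_of_eventuallyEq hev
  have heq : EqOn u v (interior K₁) := fun y hy => by
    have : χ y = 1 := hχ1 (interior_subset hy)
    simp [hvdef, this]
  refine ⟨v, hvC, fun x hx => ?_⟩
  have hx₁ : x ∈ interior K₁ := hKK₁ hx
  have e0 : u =ᶠ[𝓝 x] v := eventually_of_mem (isOpen_interior.mem_nhds hx₁) heq
  have e1' : fderiv ℝ u =ᶠ[𝓝 x] fderiv ℝ v :=
    eventually_of_mem (isOpen_interior.mem_nhds hx₁) (fun y hy =>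
      Filter.EventuallyEq.fderiv_eq
        (eventually_of_mem (isOpen_interior.mem_nhds hy) heq : u =ᶠ[𝓝 y] v))
  exact ⟨heq hx₁, e0.fderiv_eq, e1'.fderiv_eq⟩

def pA (d s : ℕ) (φ : Euc d × Euc s → Fin d → Fin d → ℝ) (v : Euc d → Euc s) (i j : Fin d)
    (x : Euc d) : ℝ :=
  (fderiv ℝ (fderiv ℝ φ) (x, v x) (ex d i, 0) (ex d j, 0)) i j

def pB (d s : ℕ) (φ : Euc d × Euc s → Fin d → Fin d → ℝ) (v : Euc d → Euc s) (i j : Fin d)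
    (x : Euc d) : ℝ :=
  (fderiv ℝ (fderiv ℝ φ) (x, v x) (ex d i, 0) ((0 : Euc d), fderiv ℝ v x (ex d j))) i j

def pC (d s : ℕ) (φ : Euc d × Euc s → Fin d → Fin d → ℝ) (v : Euc d → Euc s) (i j : Fin d)
    (x : Euc d) : ℝ :=
  (fderiv ℝ (fderiv ℝ φ) (x, v x) ((0 : Euc d), fderiv ℝ v x (ex d i)) (ex d j, 0)) i j

def pE (d s : ℕ) (φ : Euc d × Euc s → Fin d → Fin d → ℝ) (v : Euc d → Euc s) (i j : Fin d)
    (x : Euc d) : ℝ :=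
  (fderiv ℝ (fderiv ℝ φ) (x, v x) ((0 : Euc d), fderiv ℝ v x (ex d i))
    ((0 : Euc d), fderiv ℝ v x (ex d j))) i j

def pF (d s : ℕ) (φ : Euc d × Euc s → Fin d → Fin d → ℝ) (v : Euc d → Euc s) (i j : Fin d)
    (x : Euc d) : ℝ :=
  (fderiv ℝ φ (x, v x) ((0 : Euc d), fderiv ℝ (fderiv ℝ v) x (ex d i) (ex d j))) i j

lemma integrable_all (d s : ℕ) (φ : Euc d × Euc s → Fin d → Fin d → ℝ) (hφ : ContDiff ℝ 2 φ)
    (K : Set (Euc d)) (hK : IsCompact K) (hφK : ∀ x z, x ∉ K → φ (x, z) = 0)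
    (v : Euc d → Euc s) (hv : ContDiff ℝ 2 v) (i j : Fin d) :
    Integrable (pA d s φ v i j) ∧ Integrable (pB d s φ v i j) ∧ Integrable (pC d s φ v i j)
      ∧ Integrable (pE d s φ v i j) ∧ Integrable (pF d s φ v i j) := by
  have hφ1 : ContDiff ℝ 1 (fderiv ℝ φ) := hφ.fderiv_right (by norm_num)
  have hv1 : ContDiff ℝ 1 (fderiv ℝ v) := hv.fderiv_right (by norm_num)
  have cw : Continuous (fun x : Euc d => ((x, v x) : Euc d × Euc s)) :=
    continuous_id.prodMk hv.continuous
  have cDφ : Continuous (fun x : Euc d => fderiv ℝ φ (x, v x)) := hφ1.continuous.comp cw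
  have cD2φ : Continuous (fun x : Euc d => fderiv ℝ (fderiv ℝ φ) (x, v x)) :=
    ((hφ1.fderiv_right (m := 0) (by norm_num)).continuous).comp cw
  have cDv : Continuous (fderiv ℝ v) := hv1.continuous
  have cD2v : Continuous (fderiv ℝ (fderiv ℝ v)) := (hv1.fderiv_right (m := 0) (by norm_num)).continuous
  have hz := fderiv_phi_zero hK.isClosed hφK
  have integ : ∀ (G : Euc d → ℝ), Continuous G → (∀ x, x ∉ K → G x = 0) → Integrable G :=
    fun G hG h0 => hG.integrable_of_hasCompactSupport (HasCompactSupport.intro hK h0)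
  have entry : ∀ (G : Euc d → Fin d → Fin d → ℝ), Continuous G →
      Continuous (fun x => G x i j) :=
    fun G hG => (continuous_apply j).comp ((continuous_apply i).comp hG)
  refine ⟨integ _ (entry _ ?_) ?_, integ _ (entry _ ?_) ?_, integ _ (entry _ ?_) ?_,
    integ _ (entry _ ?_) ?_, integ _ (entry _ ?_) ?_⟩
  · exact (cD2φ.clm_apply continuous_const).clm_apply continuous_const
  · intro x hx; simp [pA, (hz (x, v x) hx).2]
  · exact (cD2φ.clm_apply continuous_const).clm_apply
      (continuous_const.prodMk (cDv.clm_apply continuous_const))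
  · intro x hx; simp [pB, (hz (x, v x) hx).2]
  · exact (cD2φ.clm_apply
      (continuous_const.prodMk (cDv.clm_apply continuous_const))).clm_apply continuous_const
  · intro x hx; simp [pC, (hz (x, v x) hx).2]
  · exact (cD2φ.clm_apply
      (continuous_const.prodMk (cDv.clm_apply continuous_const))).clm_apply
      (continuous_const.prodMk (cDv.clm_apply continuous_const))
  · intro x hx; simp [pE, (hz (x, v x) hx).2]
  · exact cDφ.clm_apply (continuous_const.prodMk
      ((cD2v.clm_apply continuous_const).clm_apply continuous_const))
  · intro x hx; simp [pF, (hz (x, v x) hx).1]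

lemma main_global (d s : ℕ) (φ : Euc d × Euc s → Fin d → Fin d → ℝ) (hφ : ContDiff ℝ 2 φ)
    (K : Set (Euc d)) (hK : IsCompact K) (hφK : ∀ x z, x ∉ K → φ (x, z) = 0)
    (v : Euc d → Euc s) (hv : ContDiff ℝ 2 v) (i j : Fin d) :
    -(∫ x, pA d s φ v i j x) + (∫ x, pF d s φ v i j x) + (∫ x, pE d s φ v i j x) = 0 := by
  obtain ⟨intA, intB, intC, intE, intF⟩ := integrable_all d s φ hφ K hK hφK v hv i j
  have hφ1 : ContDiff ℝ 1 (fderiv ℝ φ) := hφ.fderiv_right (by norm_num)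
  have hv1 : ContDiff ℝ 1 (fderiv ℝ v) := hv.fderiv_right (by norm_num)
  have hφ1d : Differentiable ℝ (fderiv ℝ φ) := hφ1.differentiable one_ne_zero
  have hv1d : Differentiable ℝ (fderiv ℝ v) := hv1.differentiable one_ne_zero
  have hvd : Differentiable ℝ v := hv.differentiable (by norm_num)
  have hz := fderiv_phi_zero hK.isClosed hφK
  have cw : Continuous (fun x : Euc d => ((x, v x) : Euc d × Euc s)) :=
    continuous_id.prodMk hv.continuous
  have cDφ : Continuous (fun x : Euc d => fderiv ℝ φ (x, v x)) := hφ1.continuous.comp cw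
  have cD2φ : Continuous (fun x : Euc d => fderiv ℝ (fderiv ℝ φ) (x, v x)) :=
    ((hφ1.fderiv_right (m := 0) (by norm_num)).continuous).comp cw
  have cDv : Continuous (fderiv ℝ v) := hv1.continuous
  have cD2v : Continuous (fderiv ℝ (fderiv ℝ v)) :=
    (hv1.fderiv_right (m := 0) (by norm_num)).continuous
  have integ : ∀ (G : Euc d → ℝ), Continuous G → (∀ x, x ∉ K → G x = 0) → Integrable G :=
    fun G hG h0 => hG.integrable_of_hasCompactSupport (HasCompactSupport.intro hK h0)
  have hw : ∀ x : Euc d, HasFDerivAt (fun y : Euc d => ((y, v y) : Euc d × Euc s))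
      ((ContinuousLinearMap.id ℝ (Euc d)).prod (fderiv ℝ v x)) x :=
    fun x => HasFDerivAt.prodMk (hasFDerivAt_id x) (hvd x).hasFDerivAt
  have hc : ∀ x : Euc d, HasFDerivAt (fun y : Euc d => fderiv ℝ φ (y, v y))
      ((fderiv ℝ (fderiv ℝ φ) (x, v x)).comp
        ((ContinuousLinearMap.id ℝ (Euc d)).prod (fderiv ℝ v x))) x :=
    fun x => (hφ1d (x, v x)).hasFDerivAt.comp x (hw x)
  have hdva : ∀ (e : Euc d) (x : Euc d), HasFDerivAt (fun y => fderiv ℝ v y e)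
      ((fderiv ℝ v x).comp 0 + (fderiv ℝ (fderiv ℝ v) x).flip e) x :=
    fun e x => (hv1d x).hasFDerivAt.clm_apply (hasFDerivAt_const e x)
  have symφ : ∀ (x : Euc d) (p q : Euc d × Euc s),
      fderiv ℝ (fderiv ℝ φ) (x, v x) p q = fderiv ℝ (fderiv ℝ φ) (x, v x) q p :=
    fun x p q => second_derivative_symmetric
      (fun y => (hφ.differentiable (by norm_num) y).hasFDerivAt)
      ((hφ1d (x, v x)).hasFDerivAt) p q
  have symv : ∀ (x : Euc d) (a b : Euc d),
      fderiv ℝ (fderiv ℝ v) x a b = fderiv ℝ (fderiv ℝ v) x b a :=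
    fun x a b => second_derivative_symmetric (fun y => (hvd y).hasFDerivAt)
      ((hv1d x).hasFDerivAt) a b
  -- the two symmetric "B/C-type" integration by parts identities
  have IBC : ∀ (e dir : Euc d),
      ∫ x, ((fderiv ℝ φ (x, v x) ((0:Euc d), fderiv ℝ (fderiv ℝ v) x dir e)) i j
        + (fderiv ℝ (fderiv ℝ φ) (x, v x) (dir, 0) ((0:Euc d), fderiv ℝ v x e)) i j
        + (fderiv ℝ (fderiv ℝ φ) (x, v x) ((0:Euc d), fderiv ℝ v x dir)
            ((0:Euc d), fderiv ℝ v x e)) i j) = 0 := by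
    intro e dir
    obtain ⟨DB, hder, hval⟩ : ∃ DB : Euc d → (Euc d →L[ℝ] ℝ),
        (∀ x, HasFDerivAt (fun y => (fderiv ℝ φ (y, v y) ((0:Euc d), fderiv ℝ v y e)) i j)
          (DB x) x)
        ∧ ∀ x, DB x dir = (fderiv ℝ φ (x, v x) ((0:Euc d), fderiv ℝ (fderiv ℝ v) x dir e)) i j
            + (fderiv ℝ (fderiv ℝ φ) (x, v x) (dir, 0) ((0:Euc d), fderiv ℝ v x e)) i j
            + (fderiv ℝ (fderiv ℝ φ) (x, v x) ((0:Euc d), fderiv ℝ v x dir)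
                ((0:Euc d), fderiv ℝ v x e)) i j := by
      refine ⟨fun x => (ContinuousLinearMap.proj j).comp ((ContinuousLinearMap.proj i).comp
        ((fderiv ℝ φ (x, v x)).comp
            ((0 : Euc d →L[ℝ] Euc d).prod
              ((fderiv ℝ v x).comp (0 : Euc d →L[ℝ] Euc d) + (fderiv ℝ (fderiv ℝ v) x).flip e))
          + ((fderiv ℝ (fderiv ℝ φ) (x, v x)).comp
              ((ContinuousLinearMap.id ℝ (Euc d)).prod (fderiv ℝ v x))).flip
              ((0:Euc d), fderiv ℝ v x e))), fun x => ?_, fun x => ?_⟩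
      · exact (ContinuousLinearMap.proj j).hasFDerivAt.comp x
          ((ContinuousLinearMap.proj i).hasFDerivAt.comp x
            ((hc x).clm_apply (HasFDerivAt.prodMk (hasFDerivAt_const (0 : Euc d) x) (hdva e x))))
      · simp only [ContinuousLinearMap.comp_apply, ContinuousLinearMap.add_apply,
          ContinuousLinearMap.flip_apply, ContinuousLinearMap.prod_apply,
          ContinuousLinearMap.zero_apply, ContinuousLinearMap.comp_zero,
          ContinuousLinearMap.coe_id', id_eq, ContinuousLinearMap.proj_apply,
          zero_add, Pi.add_apply]
        rw [expand2 (fderiv ℝ (fderiv ℝ φ) (x, v x)) dir (0:Euc d)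
          (fderiv ℝ v x dir) (fderiv ℝ v x e) i j]
        simp [Prod.mk_zero_zero]
        ring
    have cfun : Continuous fun x => (fderiv ℝ φ (x, v x) ((0:Euc d), fderiv ℝ v x e)) i j :=
      (continuous_apply j).comp ((continuous_apply i).comp
        (cDφ.clm_apply (continuous_const.prodMk (cDv.clm_apply continuous_const))))
    have h0fun : ∀ x, x ∉ K → (fderiv ℝ φ (x, v x) ((0:Euc d), fderiv ℝ v x e)) i j = 0 := by
      intro x hx; simp [(hz (x, v x) hx).1]
    have hintd : Integrable fun x => DB x dir := by
      rw [funext hval]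
      apply integ
      · exact (((continuous_apply j).comp ((continuous_apply i).comp
            (cDφ.clm_apply (continuous_const.prodMk
              ((cD2v.clm_apply continuous_const).clm_apply continuous_const))))).add
          ((continuous_apply j).comp ((continuous_apply i).comp
            ((cD2φ.clm_apply continuous_const).clm_apply (continuous_const.prodMk
              (cDv.clm_apply continuous_const)))))).add
          ((continuous_apply j).comp ((continuous_apply i).comp
            ((cD2φ.clm_apply (continuous_const.prodMk (cDv.clm_apply continuous_const))).clm_apply
              (continuous_const.prodMk (cDv.clm_apply continuous_const)))))
      · intro x hx
        simp [(hz (x, v x) hx).1, (hz (x, v x) hx).2]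
    have hk := key hder (integ _ cfun h0fun) hintd
    rw [funext hval] at hk
    exact hk
  -- the "A-type" identity
  have IA : ∫ x, (pA d s φ v i j x + pB d s φ v i j x + pC d s φ v i j x
      + pE d s φ v i j x + pF d s φ v i j x) = 0 := by
    obtain ⟨DA, hder, hval⟩ : ∃ DA : Euc d → (Euc d →L[ℝ] ℝ),
        (∀ x, HasFDerivAt
          (fun y => (fderiv ℝ φ (y, v y) (ex d j, fderiv ℝ v y (ex d j))) i j) (DA x) x)
        ∧ ∀ x, DA x (ex d i) = pA d s φ v i j x + pB d s φ v i j x + pC d s φ v i j x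
            + pE d s φ v i j x + pF d s φ v i j x := by
      refine ⟨fun x => (ContinuousLinearMap.proj j).comp ((ContinuousLinearMap.proj i).comp
        ((fderiv ℝ φ (x, v x)).comp
            ((0 : Euc d →L[ℝ] Euc d).prod
              ((fderiv ℝ v x).comp (0 : Euc d →L[ℝ] Euc d) + (fderiv ℝ (fderiv ℝ v) x).flip (ex d j)))
          + ((fderiv ℝ (fderiv ℝ φ) (x, v x)).comp
              ((ContinuousLinearMap.id ℝ (Euc d)).prod (fderiv ℝ v x))).flip
              (ex d j, fderiv ℝ v x (ex d j)))), fun x => ?_, fun x => ?_⟩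
      · exact (ContinuousLinearMap.proj j).hasFDerivAt.comp x
          ((ContinuousLinearMap.proj i).hasFDerivAt.comp x
            ((hc x).clm_apply (HasFDerivAt.prodMk (hasFDerivAt_const (ex d j) x) (hdva (ex d j) x))))
      · simp only [ContinuousLinearMap.comp_apply, ContinuousLinearMap.add_apply,
          ContinuousLinearMap.flip_apply, ContinuousLinearMap.prod_apply,
          ContinuousLinearMap.zero_apply, ContinuousLinearMap.comp_zero,
          ContinuousLinearMap.coe_id', id_eq, ContinuousLinearMap.proj_apply,
          zero_add, Pi.add_apply]
        rw [expand2 (fderiv ℝ (fderiv ℝ φ) (x, v x)) (ex d i) (ex d j)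
          (fderiv ℝ v x (ex d i)) (fderiv ℝ v x (ex d j)) i j]
        simp only [pA, pB, pC, pE, pF]
        ring
    have cfun : Continuous fun x =>
        (fderiv ℝ φ (x, v x) (ex d j, fderiv ℝ v x (ex d j))) i j :=
      (continuous_apply j).comp ((continuous_apply i).comp
        (cDφ.clm_apply (continuous_const.prodMk (cDv.clm_apply continuous_const))))
    have h0fun : ∀ x, x ∉ K →
        (fderiv ℝ φ (x, v x) (ex d j, fderiv ℝ v x (ex d j))) i j = 0 := by
      intro x hx; simp [(hz (x, v x) hx).1]
    have hintd : Integrable fun x => DA x (ex d i) := by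
      rw [funext hval]
      exact (((intA.add intB).add intC).add intE).add intF
    have hk := key hder (integ _ cfun h0fun) hintd
    rw [funext hval] at hk
    exact hk
  -- split the integrals
  have IAs : (∫ x, pA d s φ v i j x) + (∫ x, pB d s φ v i j x) + (∫ x, pC d s φ v i j x)
      + (∫ x, pE d s φ v i j x) + (∫ x, pF d s φ v i j x) = 0 := by
    rw [← integral_add (f := pA d s φ v i j) (g := pB d s φ v i j) intA intB,
      ← integral_add (f := (fun x => pA d s φ v i j x + pB d s φ v i j x)) (g := pC d s φ v i j) (intA.add intB) intC,
      ← integral_add (f := (fun x => pA d s φ v i j x + pB d s φ v i j x + pC d s φ v i j x)) (g := pE d s φ v i j) ((intA.add intB).add intC) intE,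
      ← integral_add (f := (fun x => pA d s φ v i j x + pB d s φ v i j x + pC d s φ v i j x + pE d s φ v i j x)) (g := pF d s φ v i j)
        (((intA.add intB).add intC).add intE) intF]
    exact IA
  have IBs : (∫ x, pF d s φ v i j x) + (∫ x, pB d s φ v i j x) + (∫ x, pE d s φ v i j x)
      = 0 := by
    have h := IBC (ex d j) (ex d i)
    have hre : (fun x => (fderiv ℝ φ (x, v x)
          ((0:Euc d), fderiv ℝ (fderiv ℝ v) x (ex d i) (ex d j))) i j
        + (fderiv ℝ (fderiv ℝ φ) (x, v x) (ex d i, 0) ((0:Euc d), fderiv ℝ v x (ex d j))) i j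
        + (fderiv ℝ (fderiv ℝ φ) (x, v x) ((0:Euc d), fderiv ℝ v x (ex d i))
            ((0:Euc d), fderiv ℝ v x (ex d j))) i j)
        = fun x => pF d s φ v i j x + pB d s φ v i j x + pE d s φ v i j x := rfl
    rw [hre] at h
    rw [← integral_add (f := pF d s φ v i j) (g := pB d s φ v i j) intF intB,
      ← integral_add (f := (fun x => pF d s φ v i j x + pB d s φ v i j x)) (g := pE d s φ v i j) (intF.add intB) intE]
    exact h
  have ICs : (∫ x, pF d s φ v i j x) + (∫ x, pC d s φ v i j x) + (∫ x, pE d s φ v i j x)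
      = 0 := by
    have h := IBC (ex d i) (ex d j)
    have hre : (fun x => (fderiv ℝ φ (x, v x)
          ((0:Euc d), fderiv ℝ (fderiv ℝ v) x (ex d j) (ex d i))) i j
        + (fderiv ℝ (fderiv ℝ φ) (x, v x) (ex d j, 0) ((0:Euc d), fderiv ℝ v x (ex d i))) i j
        + (fderiv ℝ (fderiv ℝ φ) (x, v x) ((0:Euc d), fderiv ℝ v x (ex d j))
            ((0:Euc d), fderiv ℝ v x (ex d i))) i j)
        = fun x => pF d s φ v i j x + pC d s φ v i j x + pE d s φ v i j x := by
      funext x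
      rw [symv x (ex d j) (ex d i),
        symφ x (ex d j, 0) ((0:Euc d), fderiv ℝ v x (ex d i)),
        symφ x ((0:Euc d), fderiv ℝ v x (ex d j)) ((0:Euc d), fderiv ℝ v x (ex d i))]
      rfl
    rw [hre] at h
    rw [← integral_add (f := pF d s φ v i j) (g := pC d s φ v i j) intF intC,
      ← integral_add (f := (fun x => pF d s φ v i j x + pC d s φ v i j x)) (g := pE d s φ v i j) (intF.add intC) intE]
    exact h
  linarith [IAs, IBs, ICs]

/-- Proposition 17: for `u ∈ C²(Ω, Γ)`, the triple of measures
`(H, E, μ) = ((∇u ⊗ ∇u) δ_u, (∇²u) δ_u, δ_u)` satisfies the second-order continuity equation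
`−∇_x² μ − div_z E + div_z² H = 0` weakly, i.e.
`−∫ div_x² φ dμ + ∫ ⟨∇_z φ, dE⟩ + ∫ ⟨∇_z² φ, dH⟩ = 0` for all test functions `φ`; by the
definitions of `δ_u`, `(∇²u)δ_u` and `(∇u ⊗ ∇u)δ_u`, all pairings are integrals over `Ω`
along the graph of `u`. -/
theorem stmt11 (d s : ℕ) (Ω : Set (Euc d)) (hΩo : IsOpen Ω) (hΩb : Bornology.IsBounded Ω)
    (Γ : Set (Euc s)) (hΓ : IsCompact Γ)
    (u : Euc d → Euc s) (hu2 : ContDiffOn ℝ 2 u Ω) (huΓ : Set.MapsTo u Ω Γ) :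
    ∀ φ ∈ Test2 d s Ω,
      -(∫ x in Ω, ∑ i : Fin d, ∑ j : Fin d,
          ((fderiv ℝ (fderiv ℝ φ) (x, u x) (ex d i, 0)) (ex d j, 0)) i j)
        + (∫ x in Ω, ∑ i : Fin d, ∑ j : Fin d, ∑ k : Fin s,
            (fderiv ℝ φ (x, u x) ((0 : Euc d), ex s k)) i j
              * ((fderiv ℝ (fderiv ℝ u) x (ex d i)) (ex d j)) k)
        + (∫ x in Ω, ∑ i : Fin d, ∑ j : Fin d, ∑ k : Fin s, ∑ l : Fin s,
            ((fderiv ℝ (fderiv ℝ φ) (x, u x) ((0 : Euc d), ex s k)) ((0 : Euc d), ex s l)) i j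
              * (fderiv ℝ u x (ex d i)) k * (fderiv ℝ u x (ex d j)) l)
        = 0 := by
  rintro φ ⟨hφ2, K, hK, hKΩ, hφK⟩
  obtain ⟨v, hv2, hvK⟩ := exists_global hΩo hK hKΩ hu2
  have hz := fderiv_phi_zero hK.isClosed hφK
  have hint := fun i j => integrable_all d s φ hφ2 K hK hφK v hv2 i j
  have conv1 : (∫ x in Ω, ∑ i : Fin d, ∑ j : Fin d,
        ((fderiv ℝ (fderiv ℝ φ) (x, u x) (ex d i, 0)) (ex d j, 0)) i j)
      = ∫ x, ∑ i : Fin d, ∑ j : Fin d, pA d s φ v i j x := by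
    have e1 : EqOn (fun x => ∑ i : Fin d, ∑ j : Fin d,
        ((fderiv ℝ (fderiv ℝ φ) (x, u x) (ex d i, 0)) (ex d j, 0)) i j)
        (fun x => ∑ i : Fin d, ∑ j : Fin d, pA d s φ v i j x) Ω := by
      intro x _
      by_cases hxK : x ∈ K
      · obtain ⟨h0, _, _⟩ := hvK x hxK
        simp only [pA]
        rw [h0]
      · simp [pA, (hz (x, u x) hxK).2, (hz (x, v x) hxK).2]
    rw [setIntegral_congr_fun hΩo.measurableSet e1]
    exact setIntegral_eq_integral_of_forall_compl_eq_zero fun x hx => by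
      have hxK : x ∉ K := fun h => hx (hKΩ h)
      simp [pA, (hz (x, v x) hxK).2]
  have conv2 : (∫ x in Ω, ∑ i : Fin d, ∑ j : Fin d, ∑ k : Fin s,
        (fderiv ℝ φ (x, u x) ((0 : Euc d), ex s k)) i j
          * ((fderiv ℝ (fderiv ℝ u) x (ex d i)) (ex d j)) k)
      = ∫ x, ∑ i : Fin d, ∑ j : Fin d, pF d s φ v i j x := by
    have e1 : EqOn (fun x => ∑ i : Fin d, ∑ j : Fin d, ∑ k : Fin s,
        (fderiv ℝ φ (x, u x) ((0 : Euc d), ex s k)) i j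
          * ((fderiv ℝ (fderiv ℝ u) x (ex d i)) (ex d j)) k)
        (fun x => ∑ i : Fin d, ∑ j : Fin d, pF d s φ v i j x) Ω := by
      intro x _
      by_cases hxK : x ∈ K
      · obtain ⟨h0, _, h2⟩ := hvK x hxK
        beta_reduce
        rw [h0, h2]
        refine Finset.sum_congr rfl fun i _ => Finset.sum_congr rfl fun j _ => ?_
        simpa [pF] using collapse1 (fderiv ℝ φ (x, v x)) i j
          (fderiv ℝ (fderiv ℝ v) x (ex d i) (ex d j))
      · simp [pF, (hz (x, u x) hxK).1, (hz (x, v x) hxK).1]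
    rw [setIntegral_congr_fun hΩo.measurableSet e1]
    exact setIntegral_eq_integral_of_forall_compl_eq_zero fun x hx => by
      have hxK : x ∉ K := fun h => hx (hKΩ h)
      simp [pF, (hz (x, v x) hxK).1]
  have conv3 : (∫ x in Ω, ∑ i : Fin d, ∑ j : Fin d, ∑ k : Fin s, ∑ l : Fin s,
        ((fderiv ℝ (fderiv ℝ φ) (x, u x) ((0 : Euc d), ex s k)) ((0 : Euc d), ex s l)) i j
          * (fderiv ℝ u x (ex d i)) k * (fderiv ℝ u x (ex d j)) l)
      = ∫ x, ∑ i : Fin d, ∑ j : Fin d, pE d s φ v i j x := by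
    have e1 : EqOn (fun x => ∑ i : Fin d, ∑ j : Fin d, ∑ k : Fin s, ∑ l : Fin s,
        ((fderiv ℝ (fderiv ℝ φ) (x, u x) ((0 : Euc d), ex s k)) ((0 : Euc d), ex s l)) i j
          * (fderiv ℝ u x (ex d i)) k * (fderiv ℝ u x (ex d j)) l)
        (fun x => ∑ i : Fin d, ∑ j : Fin d, pE d s φ v i j x) Ω := by
      intro x _
      by_cases hxK : x ∈ K
      · obtain ⟨h0, h1, _⟩ := hvK x hxK
        beta_reduce
        rw [h0, h1]
        refine Finset.sum_congr rfl fun i _ => Finset.sum_congr rfl fun j _ => ?_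
        simpa [pE] using collapse2 (fderiv ℝ (fderiv ℝ φ) (x, v x)) i j
          (fderiv ℝ v x (ex d i)) (fderiv ℝ v x (ex d j))
      · simp [pE, (hz (x, u x) hxK).2, (hz (x, v x) hxK).2]
    rw [setIntegral_congr_fun hΩo.measurableSet e1]
    exact setIntegral_eq_integral_of_forall_compl_eq_zero fun x hx => by
      have hxK : x ∉ K := fun h => hx (hKΩ h)
      simp [pE, (hz (x, v x) hxK).2]
  rw [conv1, conv2, conv3]
  have swap : ∀ (P : Fin d → Fin d → Euc d → ℝ), (∀ i j, Integrable (P i j)) →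
      ∫ x, ∑ i : Fin d, ∑ j : Fin d, P i j x
        = ∑ i : Fin d, ∑ j : Fin d, ∫ x, P i j x := by
    intro P hP
    rw [integral_finset_sum _ (fun i _ => integrable_finset_sum _ (fun j _ => hP i j))]
    exact Finset.sum_congr rfl fun i _ => integral_finset_sum _ (fun j _ => hP i j)
  rw [swap (fun i j => pA d s φ v i j) (fun i j => (hint i j).1),
    swap (fun i j => pF d s φ v i j) (fun i j => (hint i j).2.2.2.2),
    swap (fun i j => pE d s φ v i j) (fun i j => (hint i j).2.2.2.1)]
  have hAFE : ∀ i j, (∫ x, pA d s φ v i j x)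
      = (∫ x, pF d s φ v i j x) + (∫ x, pE d s φ v i j x) := fun i j => by
    linarith [main_global d s φ hφ2 K hK hφK v hv2 i j]
  simp only [hAFE]
  simp only [Finset.sum_add_distrib]
  ring
end
end
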